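/- arXiv:2312.08538 — 3 statements merged into one kernel-verified Lean document; each statement's English description precedes it below -/
import Mathlib

section
/- Fix an integer s ≥ 1 and a nonzero vector e ∈ ℝ^d, and define the stochastic quantizer C(e) coordinatewise by C(e)_i = ||e||·sign(e_i)·ξ_i, where, letting l ∈ {0,1,…,s} be the integer with |e_i|/||e|| ∈ [l/s, (l+1)/s], the random variable ξ_i equals (l+1)/s with probability (|e_i|/||e||)·s − l and equals l/s otherwise, independently across coordinates. Then (i) E[C(e)] = e, and (ii) E[||C(e) − e||²] ≤ min{d/s², √d/s}·||e||². -/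
/-!
Each `ξ i` takes the two values of the grid `ℕ / s` adjacent to `x = |e i| / ‖e‖`, the upper
one with probability `p = x s - ⌊x s⌋`, so its mean is `x` and its variance is `p (1 - p) / s²`.
Since `p (1 - p) ≤ min 1 (x s)`, each coordinate of `C(e) - e` has second moment at most
`‖e‖² min (1 / s²) (x / s)`, and summing over the coordinates with `∑ |e i| ≤ √d ‖e‖`
(Cauchy–Schwarz) gives the bound.
-/

open MeasureTheory ProbabilityTheory
open scoped ENNReal

namespace Real

lemma sign_mul_abs (r : ℝ) : sign r * |r| = r := by
  rcases lt_trichotomy r 0 with h | rfl | h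
  · rw [sign_of_neg h, abs_of_neg h]; ring
  · simp
  · rw [sign_of_pos h, abs_of_pos h]; ring

lemma sign_sq_le_one (r : ℝ) : sign r ^ 2 ≤ 1 := by
  rcases sign_apply_eq r with h | h | h <;> rw [h] <;> norm_num

lemma mul_sign_mul_abs_div_of_abs_le {r n : ℝ} (h : |r| ≤ n) : n * sign r * (|r| / n) = r := by
  rcases eq_or_ne n 0 with rfl | hn
  · simp [abs_nonpos_iff.mp h]
  · rw [mul_comm n, mul_assoc, mul_div_cancel₀ _ hn, sign_mul_abs]

end Real

lemma sub_natFloor_mul_one_sub_le_min {t : ℝ} (ht : 0 ≤ t) :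
    (t - ⌊t⌋₊) * (1 - (t - ⌊t⌋₊)) ≤ min 1 t := by
  have h0 : 0 ≤ t - ⌊t⌋₊ := sub_nonneg.mpr (Nat.floor_le ht)
  have h1 : t - ⌊t⌋₊ ≤ 1 := by linarith [Nat.lt_floor_add_one t]
  refine le_min (by nlinarith) ?_
  nlinarith [(Nat.cast_nonneg ⌊t⌋₊ : (0 : ℝ) ≤ _)]

lemma EuclideanSpace.sum_abs_div_norm_le_sqrt_card {ι : Type*} [Fintype ι]
    (v : EuclideanSpace ℝ ι) : ∑ i, |v i| / ‖v‖ ≤ √(Fintype.card ι) := by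
  rw [← Finset.sum_div]
  refine div_le_of_le_mul₀ (norm_nonneg v) (Real.sqrt_nonneg _) ?_
  have hsq : (∑ i, |v i|) ^ 2 ≤ (√(Fintype.card ι) * ‖v‖) ^ 2 := by
    rw [mul_pow, Real.sq_sqrt (Nat.cast_nonneg _), EuclideanSpace.norm_sq_eq]
    simpa [sq_abs] using sq_sum_le_card_mul_sum_sq (s := Finset.univ) (f := fun i => |v i|)
  exact le_of_pow_le_pow_left₀ two_ne_zero (by positivity) hsq

lemma EuclideanSpace.enorm_sq_eq_sum {ι : Type*} [Fintype ι] (v : EuclideanSpace ℝ ι) :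
    (‖v‖₊ : ℝ≥0∞) ^ 2 = ∑ i, ‖v i‖ₑ ^ 2 := by
  rw [PiLp.nnnorm_eq_of_L2, ← ENNReal.coe_pow, NNReal.sq_sqrt]
  push_cast
  rfl

noncomputable def randomRounding (s : ℕ) (x : ℝ) : Measure ℝ :=
  ENNReal.ofReal (x * s - ⌊x * s⌋₊) • Measure.dirac (((⌊x * s⌋₊ : ℝ) + 1) / s)
    + ENNReal.ofReal (1 - (x * s - ⌊x * s⌋₊)) • Measure.dirac ((⌊x * s⌋₊ : ℝ) / s)

namespace randomRounding

variable {s : ℕ} {x : ℝ}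

lemma integrable_id : Integrable id (randomRounding s x) :=
  ((integrable_dirac enorm_lt_top).smul_measure ENNReal.ofReal_ne_top).add_measure
    ((integrable_dirac enorm_lt_top).smul_measure ENNReal.ofReal_ne_top)

lemma lintegral_eq (g : ℝ → ℝ≥0∞) :
    ∫⁻ y, g y ∂randomRounding s x
      = ENNReal.ofReal (x * s - ⌊x * s⌋₊) * g ((⌊x * s⌋₊ + 1) / s)
        + ENNReal.ofReal (1 - (x * s - ⌊x * s⌋₊)) * g (⌊x * s⌋₊ / s) := by
  rw [randomRounding, lintegral_add_measure, lintegral_smul_measure, lintegral_smul_measure,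
    lintegral_dirac, lintegral_dirac, smul_eq_mul, smul_eq_mul]

variable {Ω : Type*} [MeasurableSpace Ω] {μ : Measure Ω} {X : Ω → ℝ}

lemma integrable_of_hasLaw (hX : HasLaw X (randomRounding s x) μ) : Integrable X μ :=
  (integrable_map_measure aestronglyMeasurable_id hX.aemeasurable).mp
    (hX.map_eq ▸ integrable_id)

variable (hs : s ≠ 0) (hx : 0 ≤ x)
include hs hx

lemma integral_id : ∫ y, y ∂randomRounding s x = x := by
  have h0 : 0 ≤ x * s - ⌊x * s⌋₊ := sub_nonneg.mpr (Nat.floor_le (by positivity))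
  have h1 : 0 ≤ 1 - (x * s - ⌊x * s⌋₊) := by linarith [Nat.lt_floor_add_one (x * s)]
  rw [randomRounding,
    integral_add_measure ((integrable_dirac enorm_lt_top).smul_measure ENNReal.ofReal_ne_top)
      ((integrable_dirac enorm_lt_top).smul_measure ENNReal.ofReal_ne_top),
    integral_smul_measure, integral_smul_measure, integral_dirac, integral_dirac,
    ENNReal.toReal_ofReal h0, ENNReal.toReal_ofReal h1, smul_eq_mul, smul_eq_mul]
  field_simp
  ring

lemma lintegral_enorm_sub_sq_le :
    ∫⁻ y, ‖y - x‖ₑ ^ 2 ∂randomRounding s x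
      ≤ ENNReal.ofReal (min (1 / (s : ℝ) ^ 2) (x / s)) := by
  have h0 : 0 ≤ x * s - ⌊x * s⌋₊ := sub_nonneg.mpr (Nat.floor_le (by positivity))
  have h1 : 0 ≤ 1 - (x * s - ⌊x * s⌋₊) := by linarith [Nat.lt_floor_add_one (x * s)]
  have hvar : (x * s - ⌊x * s⌋₊) * (1 - (x * s - ⌊x * s⌋₊)) / s ^ 2
      ≤ min (1 / (s : ℝ) ^ 2) (x / s) :=
    calc _ ≤ min 1 (x * s) / (s : ℝ) ^ 2 := by
          gcongr; exact sub_natFloor_mul_one_sub_le_min (by positivity)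
      _ = min (1 / (s : ℝ) ^ 2) (x / s) := by
          rw [← min_div_div_right (by positivity)]; congr 1; field_simp
  refine le_trans (le_of_eq ?_) (ENNReal.ofReal_le_ofReal hvar)
  rw [lintegral_eq, Real.enorm_eq_ofReal_abs, Real.enorm_eq_ofReal_abs,
    ← ENNReal.ofReal_pow (abs_nonneg _), ← ENNReal.ofReal_pow (abs_nonneg _), sq_abs, sq_abs,
    ← ENNReal.ofReal_mul h0, ← ENNReal.ofReal_mul h1,
    ← ENNReal.ofReal_add (by positivity) (by positivity)]
  congr 1
  generalize (⌊x * s⌋₊ : ℝ) = F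
  field_simp
  ring

lemma integral_of_hasLaw (hX : HasLaw X (randomRounding s x) μ) : ∫ ω, X ω ∂μ = x :=
  hX.integral_eq.trans (integral_id hs hx)

lemma lintegral_enorm_mul_sub_sq_le_of_hasLaw (hX : HasLaw X (randomRounding s x) μ) (c : ℝ) :
    ∫⁻ ω, ‖c * X ω - c * x‖ₑ ^ 2 ∂μ
      ≤ ENNReal.ofReal (c ^ 2 * min (1 / (s : ℝ) ^ 2) (x / s)) := by
  simp_rw [← mul_sub, enorm_mul, mul_pow]
  rw [lintegral_const_mul' _ _ (by simp),
    hX.lintegral_comp (f := fun y => ‖y - x‖ₑ ^ 2) (by fun_prop),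
    ENNReal.ofReal_mul (sq_nonneg c), ← Real.enorm_of_nonneg (sq_nonneg c), enorm_pow]
  gcongr
  exact lintegral_enorm_sub_sq_le hs hx

end randomRounding

lemma EuclideanSpace.sum_min_abs_div_norm_div_le {ι : Type*} [Fintype ι]
    (v : EuclideanSpace ℝ ι) (a : ℝ) {b : ℝ} (hb : 0 ≤ b) :
    ∑ i, min a (|v i| / ‖v‖ / b) ≤ min (Fintype.card ι * a) (√(Fintype.card ι) / b) := by
  refine le_min ?_ ?_
  · calc _ ≤ ∑ _i : ι, a := Finset.sum_le_sum fun i _ => min_le_left _ _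
      _ = _ := by simp
  · calc _ ≤ ∑ i, |v i| / ‖v‖ / b := Finset.sum_le_sum fun i _ => min_le_right _ _
      _ = (∑ i, |v i| / ‖v‖) / b := (Finset.sum_div ..).symm
      _ ≤ _ := by gcongr; exact v.sum_abs_div_norm_le_sqrt_card

theorem stochastic_quantizer_unbiased_and_variance_general
    (d s : ℕ) (hs : 1 ≤ s)
    (e : EuclideanSpace ℝ (Fin d))
    {Ω : Type*} [MeasurableSpace Ω] (μ : Measure Ω)
    (ξ : Fin d → Ω → ℝ) (hξmeas : ∀ i, Measurable (ξ i))
    (hξlaw : ∀ i : Fin d,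
      Measure.map (ξ i) μ =
        ENNReal.ofReal (|e i| / ‖e‖ * s - ⌊|e i| / ‖e‖ * s⌋₊) •
            Measure.dirac (((⌊|e i| / ‖e‖ * s⌋₊ : ℝ) + 1) / s)
          + ENNReal.ofReal (1 - (|e i| / ‖e‖ * s - ⌊|e i| / ‖e‖ * s⌋₊)) •
            Measure.dirac ((⌊|e i| / ‖e‖ * s⌋₊ : ℝ) / s))
    (Ce : Ω → EuclideanSpace ℝ (Fin d))
    (hCe : ∀ ω i, Ce ω i = ‖e‖ * Real.sign (e i) * ξ i ω) :
    (∫ ω, Ce ω ∂μ) = e ∧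
      ∫⁻ ω, (‖Ce ω - e‖₊ : ℝ≥0∞) ^ 2 ∂μ
        ≤ ENNReal.ofReal (min ((d : ℝ) / s ^ 2) (Real.sqrt d / s) * ‖e‖ ^ 2) := by
  have hs : s ≠ 0 := by omega
  have hx (i : Fin d) : 0 ≤ |e i| / ‖e‖ := by positivity
  have hlaw (i : Fin d) : HasLaw (ξ i) (randomRounding s (|e i| / ‖e‖)) μ :=
    ⟨(hξmeas i).aemeasurable, hξlaw i⟩
  have hce (i : Fin d) : ‖e‖ * Real.sign (e i) * (|e i| / ‖e‖) = e i :=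
    Real.mul_sign_mul_abs_div_of_abs_le (by simpa using PiLp.norm_apply_le e i)
  refine ⟨?_, ?_⟩
  · have hint (i : Fin d) : Integrable (fun ω => Ce ω i) μ := by
      simp_rw [hCe]
      exact (randomRounding.integrable_of_hasLaw (hlaw i)).const_mul _
    ext i
    simp_rw [eval_integral_piLp hint, hCe]
    rw [integral_const_mul, randomRounding.integral_of_hasLaw hs (hx i) (hlaw i), hce]
  calc ∫⁻ ω, (‖Ce ω - e‖₊ : ℝ≥0∞) ^ 2 ∂μ
      = ∑ i, ∫⁻ ω, ‖‖e‖ * Real.sign (e i) * ξ i ω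
          - ‖e‖ * Real.sign (e i) * (|e i| / ‖e‖)‖ₑ ^ 2 ∂μ := by
        simp_rw [EuclideanSpace.enorm_sq_eq_sum, PiLp.sub_apply, hCe, hce]
        exact lintegral_finsetSum' _ fun i _ => by fun_prop
    _ ≤ ∑ i, ENNReal.ofReal (‖e‖ ^ 2 * min (1 / (s : ℝ) ^ 2) (|e i| / ‖e‖ / s)) := by
        gcongr with i
        refine (randomRounding.lintegral_enorm_mul_sub_sq_le_of_hasLaw hs (hx i) (hlaw i) _).trans
          ?_
        gcongr ENNReal.ofReal (?_ * _)
        rw [mul_pow]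
        nlinarith [Real.sign_sq_le_one (e i)]
    _ = ENNReal.ofReal (‖e‖ ^ 2 * ∑ i, min (1 / (s : ℝ) ^ 2) (|e i| / ‖e‖ / s)) := by
        rw [Finset.mul_sum, ENNReal.ofReal_sum_of_nonneg fun i _ => by positivity]
    _ ≤ _ := by
        rw [mul_comm _ (‖e‖ ^ 2)]
        gcongr
        have := e.sum_min_abs_div_norm_div_le (1 / (s : ℝ) ^ 2) (Nat.cast_nonneg s)
        rwa [mul_one_div, Fintype.card_fin] at this

/-- **Unbiasedness and variance of the stochastic quantizer (QSGD).**
Fix `s ≥ 1` and a nonzero `e ∈ ℝ^d`.  For each coordinate `i`, let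
`l = ⌊(|e_i|/‖e‖)·s⌋` and let `ξ i` be a random variable equal to `(l+1)/s` with
probability `(|e_i|/‖e‖)·s - l` and to `l/s` otherwise, independently across
coordinates.  The quantizer `C(e)_i = ‖e‖ · sign(e_i) · ξ_i` satisfies
`E[C(e)] = e` and `E[‖C(e) - e‖²] ≤ min{d/s², √d/s} · ‖e‖²`. -/
theorem stochastic_quantizer_unbiased_and_variance
    (d s : ℕ) (hs : 1 ≤ s)
    (e : EuclideanSpace ℝ (Fin d)) (he : e ≠ 0)
    {Ω : Type*} [MeasurableSpace Ω] (μ : Measure Ω) [IsProbabilityMeasure μ]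
    (ξ : Fin d → Ω → ℝ) (hξmeas : ∀ i, Measurable (ξ i))
    (hξindep : iIndepFun ξ μ)
    (hξlaw : ∀ i : Fin d,
      Measure.map (ξ i) μ =
        ENNReal.ofReal (|e i| / ‖e‖ * s - ⌊|e i| / ‖e‖ * s⌋₊) •
            Measure.dirac (((⌊|e i| / ‖e‖ * s⌋₊ : ℝ) + 1) / s)
          + ENNReal.ofReal (1 - (|e i| / ‖e‖ * s - ⌊|e i| / ‖e‖ * s⌋₊)) •
            Measure.dirac ((⌊|e i| / ‖e‖ * s⌋₊ : ℝ) / s))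
    (Ce : Ω → EuclideanSpace ℝ (Fin d))
    (hCe : ∀ ω i, Ce ω i = ‖e‖ * Real.sign (e i) * ξ i ω) :
    (∫ ω, Ce ω ∂μ) = e ∧
      ∫⁻ ω, (‖Ce ω - e‖₊ : ℝ≥0∞) ^ 2 ∂μ
        ≤ ENNReal.ofReal (min ((d : ℝ) / s ^ 2) (Real.sqrt d / s) * ‖e‖ ^ 2) :=
  stochastic_quantizer_unbiased_and_variance_general d s hs e μ ξ hξmeas hξlaw Ce hCe
end

section
/- Let C be a count sketch with v rows and w columns built from hash functions h_1,…,h_v : {1,…,d} → {1,…,w} and sign functions s_1,…,s_v : {1,…,d} → {+1,−1}, all chosen independently and uniformly at random, applied to e ∈ ℝ^d; let C(e) ∈ ℝ^d denote the vector of recovered estimates. Then (i) each single-row estimate is unbiased: E[s_i(p)·S_{i, h_i(p)}] = e_p for every row i and coordinate p; and (ii) there exist absolute constants c_1, c_2 > 0 such that for any ε > 0 and failure probability ρ ∈ (0,1), if w ≥ c_1/ε² and v ≥ c_2·log(d/ρ), then with probability at least 1 − ρ the recovered vector satisfies ||e − C(e)||_∞ ≤ ε||e||. -/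
open MeasureTheory ProbabilityTheory Finset
open scoped ENNReal

/-!
A single row is unbiased: its estimate of `e p` is `e p` plus the collision terms
`s_p s_q [h_q = h_p] e_q` (`q ≠ p`), and each of these has mean zero because the sign `s_q`
is independent of the rest of the term. The same argument kills the cross terms of the
second moment, so the row's variance is `∑_{q ≠ p} e_q² P(h_q = h_p) ≤ ‖e‖² / w`, and by
Chebyshev a row misses `e p` by more than `ε‖e‖` with probability at most `1/16` once
`w ≥ 16 / ε²`. The rows are independent, so at least half of the `v` rows miss with
probability at most `C(v, ⌈v/2⌉) 16^(-⌈v/2⌉) ≤ 2^(-v)`; otherwise the median is within `ε‖e‖`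
of `e p`. A union bound over the `d` coordinates gives failure probability `d 2^(-v)`, which
is at most `ρ` when `v ≥ 2 log (d / ρ)`.
-/

/-- The median of a list of reals: the middle element (upper middle for even length)
of the list sorted in increasing order. -/
noncomputable def listMedian (l : List ℝ) : ℝ :=
  (l.insertionSort (· ≤ ·)).getD (l.length / 2) 0

theorem List.Pairwise.countP_lt_getElem_le {α : Type*} [LinearOrder α] {l : List α}
    (hl : l.Pairwise (· ≤ ·)) {k : ℕ} (hk : k < l.length) : l.countP (· < l[k]) ≤ k := by
  have hsplit := List.take_append_drop k l
  rw [List.drop_eq_getElem_cons hk] at hsplit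
  generalize l[k] = a at hsplit ⊢
  rw [← hsplit] at hl ⊢
  have hA := (List.pairwise_append.1 hl).2.1
  have hzero : (a :: l.drop (k + 1)).countP (· < a) = 0 := by
    refine List.countP_eq_zero.2 fun x hx => ?_
    simp only [decide_eq_true_eq, not_lt]
    rcases List.mem_cons.1 hx with rfl | hx
    · exact le_rfl
    · exact List.rel_of_pairwise_cons hA hx
  rw [List.countP_append, hzero, add_zero]
  exact List.countP_le_length.trans (List.length_take_le _ _)

theorem List.Pairwise.countP_getElem_lt_le {α : Type*} [LinearOrder α] {l : List α}
    (hl : l.Pairwise (· ≤ ·)) {k : ℕ} (hk : k < l.length) :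
    l.countP (l[k] < ·) + k + 1 ≤ l.length := by
  have hsplit := List.take_append_drop k l
  rw [List.drop_eq_getElem_cons hk] at hsplit
  have hlen : (l.take k).length = k := List.length_take_of_le hk.le
  generalize l[k] = a at hsplit ⊢
  rw [← hsplit] at hl ⊢
  have hA := (List.pairwise_append.1 hl).2.2
  have hzero : (l.take k ++ [a]).countP (a < ·) = 0 := by
    refine List.countP_eq_zero.2 fun x hx => ?_
    simp only [decide_eq_true_eq, not_lt]
    rcases List.mem_append.1 hx with hx | hx
    · exact hA x hx _ List.mem_cons_self
    · rw [List.mem_singleton.1 hx]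
  rw [← List.singleton_append, ← List.append_assoc, List.countP_append, hzero, zero_add,
    List.length_append, List.length_append, List.length_singleton, hlen]
  have := List.countP_le_length (p := (a < ·)) (l := l.drop (k + 1))
  omega

theorem abs_listMedian_sub_le {l : List ℝ} {m t : ℝ}
    (h : l.length < 2 * l.countP (fun x => |x - m| ≤ t)) : |listMedian l - m| ≤ t := by
  set s := l.insertionSort (· ≤ ·)
  have hperm : s.Perm l := List.perm_insertionSort _ l
  have hs : s.Pairwise (· ≤ ·) := List.pairwise_insertionSort _ l
  have hk : l.length / 2 < s.length := by
    have := l.countP_le_length (p := fun x => |x - m| ≤ t)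
    rw [hperm.length_eq]; omega
  have hmed : listMedian l = s[l.length / 2] := List.getD_eq_getElem _ _ hk
  have hlen := hperm.length_eq
  rw [← hperm.countP_eq] at h
  rw [hmed, abs_sub_le_iff]
  constructor
  · by_contra! hlt
    have := hs.countP_lt_getElem_le hk
    have := List.countP_mono_left (l := s) (p := fun x => |x - m| ≤ t)
      (q := (· < s[l.length / 2])) fun x _ hx => by
        simp only [decide_eq_true_eq] at hx ⊢
        linarith [(abs_le.1 hx).2]
    omega
  · by_contra! hlt
    have := hs.countP_getElem_lt_le hk
    have := List.countP_mono_left (l := s) (p := fun x => |x - m| ≤ t)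
      (q := (s[l.length / 2] < ·)) fun x _ hx => by
        simp only [decide_eq_true_eq] at hx ⊢
        linarith [(abs_le.1 hx).1]
    omega

theorem List.countP_ofFn {α : Type*} {n : ℕ} (g : Fin n → α) (P : α → Bool) :
    (List.ofFn g).countP P = #{i | P (g i)} := by
  rw [List.ofFn_eq_map, List.countP_map, Finset.card_def, Finset.filter_val,
    ← Multiset.countP_eq_card_filter, Fin.univ_def]
  simp only [Multiset.coe_countP]
  exact List.countP_congr fun x _ => by simp

theorem abs_listMedian_ofFn_sub_le {n : ℕ} {g : Fin n → ℝ} {m t : ℝ}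
    (h : n < 2 * #{i | |g i - m| ≤ t}) : |listMedian (List.ofFn g) - m| ≤ t := by
  apply abs_listMedian_sub_le
  rw [List.length_ofFn, List.countP_ofFn]
  simpa only [decide_eq_true_eq] using h

section

variable {Ω ι : Type*} {mΩ : MeasurableSpace Ω} {μ : Measure Ω} {m : ι → MeasurableSpace Ω}

theorem ProbabilityTheory.iIndep.indepFun_of_measurable_biSup (h_le : ∀ i, m i ≤ mΩ)
    (h : iIndep m μ) {S T : Set ι} (hST : Disjoint S T) {β γ : Type*} [MeasurableSpace β]
    [MeasurableSpace γ] {f : Ω → β} {g : Ω → γ} (hf : Measurable[⨆ i ∈ S, m i] f)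
    (hg : Measurable[⨆ i ∈ T, m i] g) : IndepFun f g μ := by
  rw [IndepFun_iff_Indep]
  exact indep_of_indep_of_le_right
    (indep_of_indep_of_le_left (indep_iSup_of_disjoint h_le h hST) hf.comap_le) hg.comap_le

theorem ProbabilityTheory.iIndep.biSup_of_pairwise_disjoint {κ : Type*} (h_le : ∀ i, m i ≤ mΩ)
    (h : iIndep m μ) {P : κ → Set ι} (hP : Pairwise (Function.onFun Disjoint P)) :
    iIndep (fun k => ⨆ i ∈ P k, m i) μ := by
  classical
  rw [iIndep_iff]
  intro A E hE
  induction A using Finset.induction_on with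
  | empty => simp [h.isProbabilityMeasure]
  | insert a A ha ih =>
    rw [Finset.set_biInter_insert, Finset.prod_insert ha,
      ← ih fun k hk => hE k (mem_insert_of_mem hk)]
    have hdisj : Disjoint (P a) (⋃ k ∈ A, P k) :=
      Set.disjoint_iUnion₂_right.2 fun k hk => hP fun hak => ha (hak ▸ hk)
    refine (Indep_iff _ _ _).1 (indep_iSup_of_disjoint h_le h hdisj) _ _
      (hE a (mem_insert_self a A)) (MeasurableSet.biInter A.countable_toSet fun k hk => ?_)
    exact MeasurableSpace.le_def.1 (biSup_mono fun i hi => Set.mem_biUnion hk hi) _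
      (hE k (mem_insert_of_mem hk))

theorem ProbabilityTheory.iIndep.measure_le_card_filter_le {κ : Type*} [Fintype κ]
    {m : κ → MeasurableSpace Ω} (h : iIndep m μ) {E : κ → Set Ω}
    [∀ ω, DecidablePred fun k => ω ∈ E k]
    (hE : ∀ k, MeasurableSet[m k] (E k)) {δ : ℝ≥0∞} (hδ : ∀ k, μ (E k) ≤ δ) (n : ℕ) :
    μ {ω | n ≤ #{k | ω ∈ E k}} ≤ (Fintype.card κ).choose n * δ ^ n := by
  have hsub :
      {ω | n ≤ #{k | ω ∈ E k}} ⊆ ⋃ A ∈ (univ : Finset κ).powersetCard n, ⋂ k ∈ A, E k := by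
    intro ω hω
    obtain ⟨A, hA, hcard⟩ := exists_subset_card_eq hω
    exact Set.mem_biUnion (mem_powersetCard_univ.2 hcard)
      (Set.mem_iInter₂.2 fun k hk => (mem_filter.1 (hA hk)).2)
  calc μ {ω | n ≤ #{k | ω ∈ E k}}
      ≤ ∑ A ∈ (univ : Finset κ).powersetCard n, μ (⋂ k ∈ A, E k) :=
        (measure_mono hsub).trans (measure_biUnion_finset_le _ _)
    _ ≤ ∑ A ∈ (univ : Finset κ).powersetCard n, δ ^ n := by
        refine sum_le_sum fun A hA => ?_
        rw [h.meas_biInter fun k _ => hE k, ← (mem_powersetCard_univ.1 hA)]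
        exact prod_le_pow_card _ _ _ fun k _ => hδ k
    _ = (Fintype.card κ).choose n * δ ^ n := by
        rw [sum_const, card_powersetCard, card_univ, nsmul_eq_mul]

theorem ProbabilityTheory.IndepFun.measure_eq_eq_inv_card {α : Type*} [Fintype α]
    [MeasurableSpace α] [MeasurableSingletonClass α] [IsProbabilityMeasure μ] {X Y : Ω → α}
    (hXY : IndepFun X Y μ) (hX : Measurable X) (hY : Measurable Y)
    (hunif : ∀ a, μ {ω | X ω = a} = (Fintype.card α : ℝ≥0∞)⁻¹) :
    μ {ω | X ω = Y ω} = (Fintype.card α : ℝ≥0∞)⁻¹ := by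
  have hfiber : ∀ a, μ ({ω | X ω = Y ω} ∩ Y ⁻¹' {a}) =
      (Fintype.card α : ℝ≥0∞)⁻¹ * μ (Y ⁻¹' {a}) := by
    intro a
    have hset : {ω | X ω = Y ω} ∩ Y ⁻¹' {a} = X ⁻¹' {a} ∩ Y ⁻¹' {a} := by
      ext ω
      simp only [Set.mem_inter_iff, Set.mem_ofPred_eq, Set.mem_preimage, Set.mem_singleton_iff]
      exact ⟨fun ⟨hxy, hy⟩ => ⟨hxy.trans hy, hy⟩, fun ⟨hx, hy⟩ => ⟨hx.trans hy.symm, hy⟩⟩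
    rw [hset, hXY.measure_inter_preimage_eq_mul _ _ (measurableSet_singleton a)
      (measurableSet_singleton a)]
    exact congrArg (· * _) (hunif a)
  calc μ {ω | X ω = Y ω}
      = ∑ a, μ ({ω | X ω = Y ω} ∩ Y ⁻¹' {a}) := by
        rw [← measure_biUnion_finset]
        · congr 1; ext ω; simp
        · exact (Set.pairwiseDisjoint_fiber Y _).mono fun a => Set.inter_subset_right
        · exact fun a _ => (measurableSet_eq_fun hX hY).inter (hY (measurableSet_singleton a))
    _ = (Fintype.card α : ℝ≥0∞)⁻¹ := by
        simp_rw [hfiber, ← mul_sum, sum_measure_preimage_singleton _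
          fun a _ => hY (measurableSet_singleton a)]
        simp

theorem integral_eq_zero_of_measure_eq_one_eq_neg_one [IsFiniteMeasure μ] {s : Ω → ℝ}
    (hs : Measurable s) (hpm : ∀ ω, s ω = 1 ∨ s ω = -1)
    (hbal : μ {ω | s ω = 1} = μ {ω | s ω = -1}) : ∫ ω, s ω ∂μ = 0 := by
  have h1 : MeasurableSet {ω | s ω = 1} := hs (measurableSet_singleton 1)
  have h2 : MeasurableSet {ω | s ω = -1} := hs (measurableSet_singleton (-1))
  have hsplit : s = fun ω => {ω | s ω = 1}.indicator 1 ω - {ω | s ω = -1}.indicator 1 ω := by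
    funext ω
    rcases hpm ω with h | h <;> norm_num [Set.indicator_apply, h]
  rw [hsplit, integral_sub ((integrable_const 1).indicator h1) ((integrable_const 1).indicator h2),
    integral_indicator_one h1, integral_indicator_one h2, measureReal_def, measureReal_def, hbal,
    sub_self]

end

theorem choose_mul_inv_sixteen_pow_le (v : ℕ) :
    (v.choose (v - v / 2) : ℝ≥0∞) * 16⁻¹ ^ (v - v / 2) ≤ 2⁻¹ ^ v := by
  have h16 : (16 : ℝ≥0∞)⁻¹ = 2⁻¹ ^ 4 := by rw [← ENNReal.inv_pow]; norm_num
  calc (v.choose (v - v / 2) : ℝ≥0∞) * 16⁻¹ ^ (v - v / 2)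
      ≤ 2 ^ v * 2⁻¹ ^ (v + v) := by
        rw [h16, ← pow_mul]
        exact mul_le_mul' (mod_cast Nat.choose_le_two_pow v _)
          (pow_le_pow_of_le_one zero_le (ENNReal.inv_le_one.2 one_le_two) (by omega))
    _ = 2⁻¹ ^ v := by
        rw [pow_add, ← mul_assoc, ← mul_pow,
          ENNReal.mul_inv_cancel two_ne_zero ENNReal.ofNat_ne_top, one_pow, one_mul]

theorem natCast_le_mul_two_pow_of_log_le {d v : ℕ} {ρ : ℝ} (hρ : 0 < ρ)
    (h : 2 * Real.log (d / ρ) ≤ v) : (d : ℝ) ≤ ρ * 2 ^ v := by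
  rcases Nat.eq_zero_or_pos d with rfl | hd
  · rw [Nat.cast_zero]; positivity
  rw [← div_le_iff₀' hρ, ← Real.log_le_log_iff (by positivity) (by positivity), Real.log_pow]
  have := Real.log_two_gt_d9
  nlinarith [(Nat.cast_nonneg v : (0 : ℝ) ≤ v)]

theorem natCast_mul_inv_two_pow_le_ofReal {d v : ℕ} {ρ : ℝ} (hρ : 0 < ρ)
    (h : 2 * Real.log (d / ρ) ≤ v) : (d : ℝ≥0∞) * 2⁻¹ ^ v ≤ ENNReal.ofReal ρ := by
  have hreal : (d : ℝ) * 2⁻¹ ^ v ≤ ρ := by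
    rw [inv_pow, ← div_eq_mul_inv, div_le_iff₀ (by positivity)]
    exact natCast_le_mul_two_pow_of_log_le hρ h
  refine le_of_eq_of_le ?_ (ENNReal.ofReal_le_ofReal hreal)
  rw [ENNReal.ofReal_mul (Nat.cast_nonneg d), ENNReal.ofReal_natCast,
    ENNReal.ofReal_pow (by norm_num), ENNReal.ofReal_inv_of_pos (by norm_num), ENNReal.ofReal_ofNat]

namespace CountSketch

section Pointwise

variable {κ ι Ω α : Type*} [DecidableEq α] {H : κ → ι → Ω → α} {Sg : κ → ι → Ω → ℝ}
  (e : EuclideanSpace ℝ ι) {i : κ} {p q : ι} {ω : Ω}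

variable (H Sg) in
def collisionTerm (i : κ) (p q : ι) (ω : Ω) : ℝ :=
  Sg i p ω * if H i q ω = H i p ω then Sg i q ω * e q else 0

theorem collisionTerm_self (hp : Sg i p ω * Sg i p ω = 1) :
    collisionTerm H Sg e i p p ω = e p := by
  rw [collisionTerm, if_pos rfl, ← mul_assoc, hp, one_mul]

theorem collisionTerm_eq_sign_mul : collisionTerm H Sg e i p q ω =
    Sg i q ω * (Sg i p ω * if H i q ω = H i p ω then e q else 0) := by
  unfold collisionTerm; split_ifs <;> ring

theorem abs_collisionTerm_le (hp : |Sg i p ω| = 1) (hq : |Sg i q ω| = 1) :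
    |collisionTerm H Sg e i p q ω| ≤ |e q| := by
  unfold collisionTerm
  split_ifs <;> simp [abs_mul, hp, hq]

theorem collisionTerm_mul_self (hp : Sg i p ω * Sg i p ω = 1) (hq : Sg i q ω * Sg i q ω = 1) :
    collisionTerm H Sg e i p q ω * collisionTerm H Sg e i p q ω =
      {ω | H i q ω = H i p ω}.indicator (fun _ => e q ^ 2) ω := by
  unfold collisionTerm
  split_ifs with h
  · rw [Set.indicator_of_mem (show ω ∈ {ω | H i q ω = H i p ω} from h)]
    linear_combination (e q ^ 2 * Sg i q ω * Sg i q ω) * hp + e q ^ 2 * hq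
  · rw [Set.indicator_of_notMem (show ω ∉ {ω | H i q ω = H i p ω} from h), mul_zero, mul_zero]

variable [Fintype ι]

variable (H Sg) in
def sketch (ω : Ω) (i : κ) (j : α) : ℝ :=
  ∑ p, if H i p ω = j then Sg i p ω * e p else 0

variable (H Sg) in
def rowEstimate (i : κ) (p : ι) (ω : Ω) : ℝ :=
  Sg i p ω * sketch H Sg e ω i (H i p ω)

theorem rowEstimate_eq_sum : rowEstimate H Sg e i p ω = ∑ q, collisionTerm H Sg e i p q ω :=
  mul_sum _ _ _

theorem rowEstimate_sub_eq_sum [DecidableEq ι] (hp : Sg i p ω * Sg i p ω = 1) :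
    rowEstimate H Sg e i p ω - e p = ∑ q ∈ univ.erase p, collisionTerm H Sg e i p q ω := by
  rw [rowEstimate_eq_sum, ← add_sum_erase _ _ (mem_univ p), collisionTerm_self e hp,
    add_sub_cancel_left]

theorem abs_rowEstimate_le (hS : ∀ q, |Sg i q ω| = 1) :
    |rowEstimate H Sg e i p ω| ≤ ∑ q, |e q| := by
  rw [rowEstimate_eq_sum]
  exact (abs_sum_le_sum_abs _ _).trans
    (sum_le_sum fun q _ => abs_collisionTerm_le e (hS p) (hS q))

noncomputable def medianEstimate {v : ℕ} (H : Fin v → ι → Ω → α) (Sg : Fin v → ι → Ω → ℝ)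
    (ω : Ω) (p : ι) : ℝ :=
  listMedian (List.ofFn fun i => rowEstimate H Sg e i p ω)

theorem abs_medianEstimate_sub_le {v : ℕ} {H : Fin v → ι → Ω → α} {Sg : Fin v → ι → Ω → ℝ}
    {t : ℝ} (hbad : #{i | t < |rowEstimate H Sg e i p ω - e p|} < v - v / 2) :
    |medianEstimate e H Sg ω p - e p| ≤ t := by
  refine abs_listMedian_ofFn_sub_le ?_
  have hsplit := card_filter_add_card_filter_not (s := univ)
    (fun i => t < |rowEstimate H Sg e i p ω - e p|)
  simp only [not_lt, card_univ, Fintype.card_fin] at hsplit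
  omega

end Pointwise

variable {κ ι Ω α : Type*} [MeasurableSpace α] (H : κ → ι → Ω → α) (Sg : κ → ι → Ω → ℝ)

abbrev sourceAlgebra : (κ × ι) ⊕ (κ × ι) → MeasurableSpace Ω
  | .inl q => MeasurableSpace.comap (H q.1 q.2) inferInstance
  | .inr q => MeasurableSpace.comap (Sg q.1 q.2) inferInstance

abbrev rowAlgebra (i : κ) : MeasurableSpace Ω :=
  ⨆ s ∈ {s | Sum.elim Prod.fst Prod.fst s = i}, sourceAlgebra H Sg s

section Measurability

variable {H Sg}

theorem measurable_hash_of_mem {T : Set ((κ × ι) ⊕ (κ × ι))} {i : κ} {p : ι}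
    (h : .inl (i, p) ∈ T) : Measurable[⨆ s ∈ T, sourceAlgebra H Sg s] (H i p) :=
  Measurable.of_comap_le (le_iSup₂ (f := fun s (_ : s ∈ T) => sourceAlgebra H Sg s) _ h)

theorem measurable_sign_of_mem {T : Set ((κ × ι) ⊕ (κ × ι))} {i : κ} {p : ι}
    (h : .inr (i, p) ∈ T) : Measurable[⨆ s ∈ T, sourceAlgebra H Sg s] (Sg i p) :=
  Measurable.of_comap_le (le_iSup₂ (f := fun s (_ : s ∈ T) => sourceAlgebra H Sg s) _ h)

variable [Fintype α] [MeasurableSingletonClass α] [DecidableEq α] (e : EuclideanSpace ℝ ι)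
  {m : MeasurableSpace Ω} {i : κ} {p q : ι}

theorem measurable_collisionTerm (hHp : Measurable[m] (H i p)) (hHq : Measurable[m] (H i q))
    (hSp : Measurable[m] (Sg i p)) (hSq : Measurable[m] (Sg i q)) :
    Measurable[m] (collisionTerm H Sg e i p q) :=
  hSp.mul (Measurable.ite (measurableSet_eq_fun hHq hHp) (hSq.mul_const _) measurable_const)

theorem measurable_rowEstimate [Fintype ι] (hH : ∀ q, Measurable[m] (H i q))
    (hS : ∀ q, Measurable[m] (Sg i q)) : Measurable[m] (rowEstimate H Sg e i p) := by
  rw [show rowEstimate H Sg e i p = fun ω => ∑ q, collisionTerm H Sg e i p q ω from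
    funext fun ω => rowEstimate_eq_sum e]
  exact Finset.measurable_sum _ fun q _ =>
    measurable_collisionTerm e (hH p) (hH q) (hS p) (hS q)

end Measurability

end CountSketch

open CountSketch

structure IsCountSketch {κ ι Ω α : Type*} [MeasurableSpace Ω] [MeasurableSpace α] [Fintype α]
    (H : κ → ι → Ω → α) (Sg : κ → ι → Ω → ℝ) (μ : Measure Ω) : Prop where
  measurable_hash : ∀ i p, Measurable (H i p)
  measurable_sign : ∀ i p, Measurable (Sg i p)
  hash_uniform : ∀ i p a, μ {ω | H i p ω = a} = (Fintype.card α : ℝ≥0∞)⁻¹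
  sign_eq_one_or_neg_one : ∀ i p ω, Sg i p ω = 1 ∨ Sg i p ω = -1
  sign_balanced : ∀ i p, μ {ω | Sg i p ω = 1} = μ {ω | Sg i p ω = -1}
  iIndep_sourceAlgebra : iIndep (sourceAlgebra H Sg) μ

namespace IsCountSketch

variable {κ ι Ω α : Type*} [MeasurableSpace Ω] [MeasurableSpace α] [Fintype α] {μ : Measure Ω}
  {H : κ → ι → Ω → α} {Sg : κ → ι → Ω → ℝ}

theorem sign_mul_self (h : IsCountSketch H Sg μ) (i : κ) (p : ι) (ω : Ω) :
    Sg i p ω * Sg i p ω = 1 := by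
  rcases h.sign_eq_one_or_neg_one i p ω with hs | hs <;> norm_num [hs]

theorem abs_sign (h : IsCountSketch H Sg μ) (i : κ) (p : ι) (ω : Ω) : |Sg i p ω| = 1 := by
  rcases h.sign_eq_one_or_neg_one i p ω with hs | hs <;> norm_num [hs]

theorem sourceAlgebra_le (h : IsCountSketch H Sg μ) (s : (κ × ι) ⊕ (κ × ι)) :
    sourceAlgebra H Sg s ≤ ‹MeasurableSpace Ω› := by
  rcases s with ⟨i, p⟩ | ⟨i, p⟩
  · exact (h.measurable_hash i p).comap_le
  · exact (h.measurable_sign i p).comap_le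

theorem iIndep_rowAlgebra (h : IsCountSketch H Sg μ) : iIndep (rowAlgebra H Sg) μ :=
  h.iIndep_sourceAlgebra.biSup_of_pairwise_disjoint h.sourceAlgebra_le fun _ _ hij =>
    Set.disjoint_left.2 fun _ hi hj => hij (hi.symm.trans hj)

theorem measure_hash_eq_hash [MeasurableSingletonClass α] (h : IsCountSketch H Sg μ) {i : κ}
    {p q : ι} (hqp : q ≠ p) : μ {ω | H i q ω = H i p ω} = (Fintype.card α : ℝ≥0∞)⁻¹ :=
  have := h.iIndep_sourceAlgebra.isProbabilityMeasure
  (h.iIndep_sourceAlgebra.indepFun_of_measurable_biSup h.sourceAlgebra_le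
    (S := {.inl (i, q)}) (T := {.inl (i, p)}) (by simpa using hqp) (measurable_hash_of_mem rfl)
    (measurable_hash_of_mem rfl)).measure_eq_eq_inv_card (h.measurable_hash i q)
    (h.measurable_hash i p) (h.hash_uniform i q)

variable [MeasurableSingletonClass α] [DecidableEq α] (e : EuclideanSpace ℝ ι) {i : κ}
  {p q r : ι}

theorem integral_collisionTerm_mul_eq_zero (h : IsCountSketch H Sg μ) (hqp : q ≠ p)
    {G : Ω → ℝ} (hG : Measurable[⨆ s ∈ ({.inr (i, q)}ᶜ : Set ((κ × ι) ⊕ (κ × ι))),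
      sourceAlgebra H Sg s] G) :
    ∫ ω, collisionTerm H Sg e i p q ω * G ω ∂μ = 0 := by
  set T : Set ((κ × ι) ⊕ (κ × ι)) := {.inr (i, q)}ᶜ
  set Z : Ω → ℝ := fun ω => (Sg i p ω * if H i q ω = H i p ω then e q else 0) * G ω
  have hZ : Measurable[⨆ s ∈ T, sourceAlgebra H Sg s] Z :=
    ((measurable_sign_of_mem (by simp [T, hqp.symm])).mul (Measurable.ite
      (measurableSet_eq_fun (measurable_hash_of_mem (by simp [T]))
        (measurable_hash_of_mem (by simp [T]))) measurable_const measurable_const)).mul hG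
  have hindep : IndepFun (Sg i q) Z μ :=
    h.iIndep_sourceAlgebra.indepFun_of_measurable_biSup h.sourceAlgebra_le disjoint_compl_right
      (measurable_sign_of_mem (Set.mem_singleton _)) hZ
  have := h.iIndep_sourceAlgebra.isProbabilityMeasure
  calc ∫ ω, collisionTerm H Sg e i p q ω * G ω ∂μ = ∫ ω, Sg i q ω * Z ω ∂μ := by
        simp_rw [Z, collisionTerm_eq_sign_mul, mul_assoc]
    _ = (∫ ω, Sg i q ω ∂μ) * ∫ ω, Z ω ∂μ :=
        hindep.integral_mul_eq_mul_integral (h.measurable_sign i q).aestronglyMeasurable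
          (hZ.mono (iSup₂_le fun s _ => h.sourceAlgebra_le s) le_rfl).aestronglyMeasurable
    _ = 0 := by
        rw [integral_eq_zero_of_measure_eq_one_eq_neg_one (h.measurable_sign i q)
          (h.sign_eq_one_or_neg_one i q) (h.sign_balanced i q), zero_mul]

theorem integral_collisionTerm (h : IsCountSketch H Sg μ) (hqp : q ≠ p) :
    ∫ ω, collisionTerm H Sg e i p q ω ∂μ = 0 := by
  simpa using h.integral_collisionTerm_mul_eq_zero e hqp (G := fun _ => 1) measurable_const

theorem integral_collisionTerm_mul_collisionTerm (h : IsCountSketch H Sg μ) (hqp : q ≠ p)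
    (hqr : q ≠ r) :
    ∫ ω, collisionTerm H Sg e i p q ω * collisionTerm H Sg e i p r ω ∂μ = 0 :=
  h.integral_collisionTerm_mul_eq_zero e hqp <| measurable_collisionTerm e
    (measurable_hash_of_mem (by simp)) (measurable_hash_of_mem (by simp))
    (measurable_sign_of_mem (by simpa using hqp.symm))
    (measurable_sign_of_mem (by simpa using hqr.symm))

theorem integral_collisionTerm_mul_self (h : IsCountSketch H Sg μ) (hqp : q ≠ p) :
    ∫ ω, collisionTerm H Sg e i p q ω * collisionTerm H Sg e i p q ω ∂μ =
      e q ^ 2 / Fintype.card α := by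
  simp_rw [collisionTerm_mul_self e (h.sign_mul_self i p _) (h.sign_mul_self i q _)]
  rw [integral_indicator_const _ (measurableSet_eq_fun (h.measurable_hash i q)
    (h.measurable_hash i p)), measureReal_def, h.measure_hash_eq_hash hqp, ENNReal.toReal_inv,
    ENNReal.toReal_natCast, smul_eq_mul, inv_mul_eq_div]

theorem integrable_collisionTerm (h : IsCountSketch H Sg μ) :
    Integrable (collisionTerm H Sg e i p q) μ :=
  have := h.iIndep_sourceAlgebra.isProbabilityMeasure
  Integrable.of_bound (measurable_collisionTerm e (h.measurable_hash i p) (h.measurable_hash i q)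
    (h.measurable_sign i p) (h.measurable_sign i q)).aestronglyMeasurable |e q|
    (ae_of_all _ fun ω => abs_collisionTerm_le e (h.abs_sign i p ω) (h.abs_sign i q ω))

theorem integrable_collisionTerm_mul (h : IsCountSketch H Sg μ) :
    Integrable (fun ω => collisionTerm H Sg e i p q ω * collisionTerm H Sg e i p r ω) μ :=
  (h.integrable_collisionTerm e).bdd_mul (h.integrable_collisionTerm e).aestronglyMeasurable
    (ae_of_all _ fun ω => abs_collisionTerm_le e (h.abs_sign i p ω) (h.abs_sign i q ω))

variable [Fintype ι]

theorem integral_rowEstimate (h : IsCountSketch H Sg μ) :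
    ∫ ω, rowEstimate H Sg e i p ω ∂μ = e p := by
  classical
  have := h.iIndep_sourceAlgebra.isProbabilityMeasure
  simp_rw [rowEstimate_eq_sum]
  rw [integral_finsetSum _ fun q _ => h.integrable_collisionTerm e,
    ← add_sum_erase _ _ (mem_univ p),
    sum_eq_zero fun q hq => h.integral_collisionTerm e (ne_of_mem_erase hq), add_zero]
  simp [collisionTerm_self e (h.sign_mul_self i p _)]

theorem integral_rowEstimate_sub_sq_le (h : IsCountSketch H Sg μ) :
    ∫ ω, (rowEstimate H Sg e i p ω - e p) ^ 2 ∂μ ≤ ‖e‖ ^ 2 / Fintype.card α := by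
  classical
  have hexpand : ∀ ω, (rowEstimate H Sg e i p ω - e p) ^ 2 = ∑ q ∈ univ.erase p,
      ∑ r ∈ univ.erase p, collisionTerm H Sg e i p q ω * collisionTerm H Sg e i p r ω := by
    intro ω
    rw [rowEstimate_sub_eq_sum e (h.sign_mul_self i p ω), sq, sum_mul_sum]
  have hdiag : ∀ q ∈ univ.erase p, ∑ r ∈ univ.erase p,
      ∫ ω, collisionTerm H Sg e i p q ω * collisionTerm H Sg e i p r ω ∂μ =
        e q ^ 2 / Fintype.card α := fun q hq =>
    (sum_eq_single_of_mem q hq fun r _ hrq =>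
      h.integral_collisionTerm_mul_collisionTerm e (ne_of_mem_erase hq) hrq.symm).trans
      (h.integral_collisionTerm_mul_self e (ne_of_mem_erase hq))
  simp_rw [hexpand]
  rw [integral_finsetSum _ fun q _ => integrable_finsetSum _ fun r _ =>
      h.integrable_collisionTerm_mul e]
  simp_rw [integral_finsetSum _ fun r _ => h.integrable_collisionTerm_mul e]
  rw [sum_congr rfl hdiag, ← sum_div, EuclideanSpace.real_norm_sq_eq]
  exact div_le_div_of_nonneg_right
    (sum_le_sum_of_subset_of_nonneg (subset_univ _) fun q _ _ => sq_nonneg (e q)) (by positivity)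

theorem measure_lt_abs_rowEstimate_sub_le (h : IsCountSketch H Sg μ) {t : ℝ} (ht : 0 < t) :
    μ {ω | t < |rowEstimate H Sg e i p ω - e p|} ≤
      ENNReal.ofReal (‖e‖ ^ 2 / Fintype.card α / t ^ 2) := by
  have := h.iIndep_sourceAlgebra.isProbabilityMeasure
  have hmeas : Measurable (rowEstimate H Sg e i p) :=
    measurable_rowEstimate e (h.measurable_hash i) (h.measurable_sign i)
  have hL2 : MemLp (rowEstimate H Sg e i p) 2 μ :=
    MemLp.of_bound hmeas.aestronglyMeasurable _
      (ae_of_all _ fun ω => abs_rowEstimate_le e (h.abs_sign i · ω))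
  have hvar : variance (rowEstimate H Sg e i p) μ ≤ ‖e‖ ^ 2 / Fintype.card α := by
    rw [variance_eq_integral hmeas.aemeasurable, h.integral_rowEstimate e]
    exact h.integral_rowEstimate_sub_sq_le e
  calc μ {ω | t < |rowEstimate H Sg e i p ω - e p|}
      ≤ μ {ω | t ≤ |rowEstimate H Sg e i p ω - ∫ ω, rowEstimate H Sg e i p ω ∂μ|} := by
        rw [h.integral_rowEstimate e]
        exact measure_mono (Set.ofPred_subset_ofPred.2 fun ω => le_of_lt)
    _ ≤ ENNReal.ofReal (variance (rowEstimate H Sg e i p) μ / t ^ 2) :=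
        meas_ge_le_variance_div_sq hL2 ht
    _ ≤ ENNReal.ofReal (‖e‖ ^ 2 / Fintype.card α / t ^ 2) := by gcongr

theorem measure_rowError_le (h : IsCountSketch H Sg μ) {ε : ℝ} (hε : 0 < ε)
    (hα : 16 / ε ^ 2 ≤ Fintype.card α) :
    μ {ω | ε * ‖e‖ < |rowEstimate H Sg e i p ω - e p|} ≤ 16⁻¹ := by
  rcases eq_or_ne e 0 with rfl | he
  · simp [rowEstimate, sketch]
  have hnorm : 0 < ‖e‖ := norm_pos_iff.2 he
  refine (h.measure_lt_abs_rowEstimate_sub_le e (mul_pos hε hnorm)).trans ?_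
  have h16 : 16 ≤ (Fintype.card α : ℝ) * ε ^ 2 := (div_le_iff₀ (by positivity)).1 hα
  have hreal : ‖e‖ ^ 2 / Fintype.card α / (ε * ‖e‖) ^ 2 ≤ 16⁻¹ := by
    rw [div_div, mul_pow, ← mul_assoc, div_le_iff₀ (by positivity)]
    nlinarith [mul_le_mul_of_nonneg_right h16 (sq_nonneg ‖e‖)]
  refine (ENNReal.ofReal_le_ofReal hreal).trans_eq ?_
  rw [ENNReal.ofReal_inv_of_pos (by norm_num), ENNReal.ofReal_ofNat]

theorem measure_le_card_rowError_le (h : IsCountSketch H Sg μ) [Fintype κ] {ε : ℝ}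
    (hε : 0 < ε) (hα : 16 / ε ^ 2 ≤ Fintype.card α) (n : ℕ) :
    μ {ω | n ≤ #{i | ε * ‖e‖ < |rowEstimate H Sg e i p ω - e p|}} ≤
      (Fintype.card κ).choose n * 16⁻¹ ^ n :=
  h.iIndep_rowAlgebra.measure_le_card_filter_le
    (E := fun i => {ω | ε * ‖e‖ < |rowEstimate H Sg e i p ω - e p|})
    (fun _ => continuous_abs.measurable.comp ((measurable_rowEstimate e
      (fun _ => measurable_hash_of_mem rfl) (fun _ => measurable_sign_of_mem rfl)).sub_const _)
      measurableSet_Ioi)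
    (fun _ => h.measure_rowError_le e hε hα) n

theorem one_sub_le_measure_norm_sub_medianEstimate_le {v : ℕ} {H : Fin v → ι → Ω → α}
    {Sg : Fin v → ι → Ω → ℝ} (h : IsCountSketch H Sg μ) {ε : ℝ} (hε : 0 < ε)
    (hα : 16 / ε ^ 2 ≤ Fintype.card α) :
    1 - Fintype.card ι * 2⁻¹ ^ v ≤
      μ {ω | ‖fun p => e p - medianEstimate e H Sg ω p‖ ≤ ε * ‖e‖} := by
  have := h.iIndep_sourceAlgebra.isProbabilityMeasure
  set bad : ι → Set Ω :=
    fun p => {ω | v - v / 2 ≤ #{i | ε * ‖e‖ < |rowEstimate H Sg e i p ω - e p|}}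
  have hgood :
      (⋃ p, bad p)ᶜ ⊆ {ω | ‖fun p => e p - medianEstimate e H Sg ω p‖ ≤ ε * ‖e‖} := by
    intro ω hω
    simp only [bad, Set.mem_compl_iff, Set.mem_iUnion, Set.mem_ofPred_eq, not_exists,
      not_le] at hω
    refine (pi_norm_le_iff_of_nonneg (by positivity)).2 fun p => ?_
    rw [Real.norm_eq_abs, abs_sub_comm]
    exact abs_medianEstimate_sub_le e (hω p)
  have hbad : μ (⋃ p, bad p) ≤ Fintype.card ι * 2⁻¹ ^ v :=
    calc μ (⋃ p, bad p) ≤ ∑ p, μ (bad p) := measure_iUnion_fintype_le _ _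
      _ ≤ ∑ _p : ι, (2⁻¹ : ℝ≥0∞) ^ v := sum_le_sum fun p _ =>
          (h.measure_le_card_rowError_le e hε hα _).trans
            (by simpa using choose_mul_inv_sixteen_pow_le v)
      _ = Fintype.card ι * 2⁻¹ ^ v := by rw [sum_const, card_univ, nsmul_eq_mul]
  calc 1 - Fintype.card ι * 2⁻¹ ^ v ≤ μ (⋃ p, bad p)ᶜ := by
        rw [tsub_le_iff_left, ← measure_univ (μ := μ), ← Set.union_compl_self (⋃ p, bad p)]
        exact (measure_union_le _ _).trans (by gcongr)
    _ ≤ _ := measure_mono hgood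

end IsCountSketch

/-- **Count sketch: unbiasedness and ℓ∞ recovery guarantee.**
A count sketch of `e ∈ ℝ^d` with `v` rows and `w` columns is built from hash functions
`H i : {1..d} → {1..w}` (uniform) and sign functions `Sg i : {1..d} → {±1}` (uniform),
all mutually independent; row `i` of the sketch is `S ω i j = ∑_{p : H i p = j} Sg i p · e p`,
and coordinate `p` is recovered as the median over rows of `Sg i p · S ω i (H i p ω)`.
Then (i) each single-row estimate is unbiased, `E[Sg i p · S_{i, H i p}] = e p`; and
(ii) there are absolute constants `c₁, c₂ > 0` such that for any `ε > 0` and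
`ρ ∈ (0,1)`, if `w ≥ c₁/ε²` and `v ≥ c₂ log(d/ρ)`, then with probability at least
`1 - ρ` the recovered vector `C(e)` satisfies `‖e - C(e)‖_∞ ≤ ε‖e‖`. -/
theorem count_sketch_unbiased_and_linf_recovery :
    ∃ c₁ : ℝ, 0 < c₁ ∧ ∃ c₂ : ℝ, 0 < c₂ ∧
      ∀ (d v w : ℕ), 0 < v → 0 < w →
      ∀ {Ω : Type} [inst : MeasurableSpace Ω] (μ : Measure Ω), IsProbabilityMeasure μ →
      ∀ (e : EuclideanSpace ℝ (Fin d))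
        (H : Fin v → Fin d → Ω → Fin w) (Sg : Fin v → Fin d → Ω → ℝ),
      (∀ i p, Measurable (H i p)) → (∀ i p, Measurable (Sg i p)) →
      -- uniform hashes
      (∀ i p (j : Fin w), μ {ω | H i p ω = j} = (w : ℝ≥0∞)⁻¹) →
      -- uniform random signs
      (∀ i p, μ {ω | Sg i p ω = 1} = 2⁻¹ ∧ μ {ω | Sg i p ω = -1} = 2⁻¹) →
      (∀ i p ω, Sg i p ω = 1 ∨ Sg i p ω = -1) →
      -- all hashes and signs are mutually independent
      iIndepFun
        (β := fun s : (Fin v × Fin d) ⊕ (Fin v × Fin d) =>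
          Sum.elim (fun _ => Fin w) (fun _ => ℝ) s)
        (m := fun s => match s with
          | .inl _ => (inferInstance : MeasurableSpace (Fin w))
          | .inr _ => (inferInstance : MeasurableSpace ℝ))
        (fun s => match s with
          | .inl q => H q.1 q.2
          | .inr q => Sg q.1 q.2) μ →
      ∀ (S : Ω → Fin v → Fin w → ℝ),
      (∀ ω i j, S ω i j = ∑ p, if H i p ω = j then Sg i p ω * e p else 0) →
      ∀ (est : Ω → Fin d → ℝ),
      (∀ ω p, est ω p =
        listMedian (List.ofFn fun i : Fin v => Sg i p ω * S ω i (H i p ω))) →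
      -- (i) single-row unbiasedness
      ((∀ i p, ∫ ω, Sg i p ω * S ω i (H i p ω) ∂μ = e p) ∧
      -- (ii) high-probability ℓ∞ recovery
        (∀ ε ρ : ℝ, 0 < ε → 0 < ρ → ρ < 1 →
          c₁ / ε ^ 2 ≤ (w : ℝ) → c₂ * Real.log (d / ρ) ≤ (v : ℝ) →
          ENNReal.ofReal (1 - ρ) ≤
            μ {ω | ‖(fun p => e p - est ω p : Fin d → ℝ)‖ ≤ ε * ‖e‖})) := by
  refine ⟨16, by norm_num, 2, by norm_num, fun d v w _ _ Ω _ μ _ e H Sg hH hSg hunif hbal hpm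
    hindep S hS est hest => ?_⟩
  obtain rfl : S = sketch H Sg e := funext fun ω => funext fun i => funext (hS ω i)
  obtain rfl : est = medianEstimate e H Sg := funext fun ω => funext (hest ω)
  have h : IsCountSketch H Sg μ :=
    { measurable_hash := hH
      measurable_sign := hSg
      hash_uniform := by simpa using hunif
      sign_eq_one_or_neg_one := hpm
      sign_balanced := fun i p => (hbal i p).1.trans (hbal i p).2.symm
      iIndep_sourceAlgebra := by
        convert (iIndepFun_iff_iIndep _ _ _).1 hindep using 2 with s
        cases s <;> rfl }
  refine ⟨fun i p => h.integral_rowEstimate e, fun ε ρ hε hρ _ hw hv => ?_⟩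
  calc ENNReal.ofReal (1 - ρ) = 1 - ENNReal.ofReal ρ := by
        rw [ENNReal.ofReal_sub _ hρ.le, ENNReal.ofReal_one]
    _ ≤ 1 - d * 2⁻¹ ^ v := tsub_le_tsub_left (natCast_mul_inv_two_pow_le_ofReal hρ hv) 1
    _ ≤ _ := by
        simpa using h.one_sub_le_measure_norm_sub_medianEstimate_le e hε (by simpa using hw)
end

section
/- Under the ConEF algorithm (p_t^i = η g_t^i + e_t^i; Δ_t^i = Q(p_t^i); x_{t+1} = x_t − (1/N)Σ_i Δ_t^i; e_{t+1}^i = C(p_t^i − Δ_t^i), with e_0^i = 0), where the stochastic gradients satisfy E[g_t^i | x_t] = ∇f(x_t), E[||g_t^i − ∇f(x_t)||² | x_t] ≤ σ² and E[||∇f(x_t)||²] ≤ G², the error compressor C is unbiased with E[||C(x) − x||² | x] ≤ θ||x||², and the gradient compressor Q satisfies E[||Q(x) − x||² | x] ≤ δ||x||²: if there exist c ∈ (0,1) and λ > 0 with δ = c/((1+λ)(1+√θ)²), then for every t ≥ 0, E[|| (1/N) Σ_{i=1}^N e_{t+1}^i ||²] ≤ (c/((1−c)λ)) · η² (σ² +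 G²). -/
/-!
Fix a worker and write `pₜ = η gₜ + eₜ`. The seed drawn at step `t` is independent of
`(xₜ, eₜ)`, so it can be integrated out first. Unbiasedness of `C` turns its variance bound into
`E‖C w‖² ≤ (1 + θ)‖w‖²`, contraction of `Q` gives `E‖p - Q p‖² ≤ δ‖p‖²`, and Young's inequality
with parameter `λ` gives `‖pₜ‖² ≤ (1 + λ⁻¹)η²‖gₜ‖² + (1 + λ)‖eₜ‖²`. Since `1 + θ ≤ (1 + √θ)²`,
the choice of `δ` makes `(1 + θ)δ(1 + λ) ≤ c`, hence
`E‖eₜ₊₁‖² ≤ c E‖eₜ‖² + (c/λ)η²(σ² + G²)`, and with `e₀ = 0` this recursion stays below its fixed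
point `c/((1 - c)λ) η²(σ² + G²)`. Jensen's inequality passes the bound to the average over the
workers.
-/

open MeasureTheory ProbabilityTheory
open scoped ENNReal BigOperators

theorem ENNReal.ofReal_norm_sq {E : Type*} [SeminormedAddCommGroup E] (v : E) :
    ENNReal.ofReal (‖v‖ ^ 2) = (‖v‖₊ : ℝ≥0∞) ^ 2 := by
  rw [ENNReal.ofReal_pow (norm_nonneg v), ofReal_norm, enorm_eq_nnnorm]

theorem norm_add_sq_le_one_add_inv_mul_add {E : Type*} [SeminormedAddCommGroup E] (a b : E)
    {lam : ℝ} (hlam : 0 < lam) :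
    ‖a + b‖ ^ 2 ≤ (1 + lam⁻¹) * ‖a‖ ^ 2 + (1 + lam) * ‖b‖ ^ 2 := by
  have hyoung := two_mul_le_add_mul_sq (a := ‖a‖) (b := ‖b‖) (inv_pos.2 hlam)
  rw [inv_inv] at hyoung
  nlinarith [norm_add_le a b, norm_nonneg (a + b)]

theorem norm_inv_card_smul_sum_sq_le {ι E : Type*} [Fintype ι] [SeminormedAddCommGroup E]
    [NormedSpace ℝ E] (v : ι → E) :
    ‖(Fintype.card ι : ℝ)⁻¹ • ∑ i, v i‖ ^ 2 ≤ (Fintype.card ι : ℝ)⁻¹ * ∑ i, ‖v i‖ ^ 2 := by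
  have hsum : ‖∑ i, v i‖ ^ 2 ≤ Fintype.card ι * ∑ i, ‖v i‖ ^ 2 :=
    (pow_le_pow_left₀ (norm_nonneg _) (norm_sum_le _ _) 2).trans
      (by simpa using sq_sum_le_card_mul_sum_sq (s := Finset.univ) (f := fun i => ‖v i‖))
  rw [norm_smul, mul_pow, Real.norm_eq_abs, sq_abs]
  rcases (Fintype.card ι).eq_zero_or_pos with h | h
  · simp [h]
  · calc _ ≤ ((Fintype.card ι : ℝ)⁻¹) ^ 2 * (Fintype.card ι * ∑ i, ‖v i‖ ^ 2) := by gcongr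
      _ = _ := by field_simp

theorem one_add_mul_mul_le_of_eq_div {θ δ c lam : ℝ} (hlam : 0 < lam)
    (hδ : δ = c / ((1 + lam) * (1 + Real.sqrt θ) ^ 2)) (hc : 0 ≤ c) :
    (1 + θ) * δ * (1 + lam) ≤ c := by
  have hθ : 1 + θ ≤ (1 + Real.sqrt θ) ^ 2 := by
    rcases le_total 0 θ with h | h
    · nlinarith [Real.sq_sqrt h, Real.sqrt_nonneg θ]
    · simp [Real.sqrt_eq_zero'.2 h]; linarith
  calc (1 + θ) * δ * (1 + lam) = c * ((1 + θ) / (1 + Real.sqrt θ) ^ 2) := by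
        rw [hδ]; field_simp
    _ ≤ c * 1 := by gcongr; exact div_le_one_of_le₀ hθ (by positivity)
    _ = c := mul_one c

theorem ENNReal.le_ofReal_div_one_sub_of_le_mul_add {a : ℕ → ℝ≥0∞} {c b : ℝ} (hc0 : 0 ≤ c)
    (hc1 : c < 1) (hb : 0 ≤ b) (ha0 : a 0 = 0)
    (ha : ∀ t, a (t + 1) ≤ ENNReal.ofReal c * a t + ENNReal.ofReal b) (t : ℕ) :
    a t ≤ ENNReal.ofReal (b / (1 - c)) := by
  have hfix : ENNReal.ofReal c * ENNReal.ofReal (b / (1 - c)) + ENNReal.ofReal b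
      = ENNReal.ofReal (b / (1 - c)) := by
    have h1c : 0 < 1 - c := by linarith
    rw [← ENNReal.ofReal_mul hc0, ← ENNReal.ofReal_add (by positivity) hb]
    congr 1
    field_simp
    ring
  induction t with
  | zero => simp [ha0]
  | succ t ih => exact (ha t).trans (hfix ▸ by gcongr)

section SecondMoment

variable {Ω E : Type*} [MeasurableSpace Ω] {ν : Measure Ω} [IsProbabilityMeasure ν]
  [NormedAddCommGroup E] [InnerProductSpace ℝ E] [CompleteSpace E]

theorem integral_norm_add_sq_of_integral_eq_zero (m : E) {u : Ω → E} (hu : MemLp u 2 ν)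
    (hu0 : ∫ ω, u ω ∂ν = 0) :
    ∫ ω, ‖m + u ω‖ ^ 2 ∂ν = ‖m‖ ^ 2 + ∫ ω, ‖u ω‖ ^ 2 ∂ν := by
  have hinner : Integrable (fun ω => 2 * inner ℝ m (u ω)) ν :=
    ((hu.integrable one_le_two).const_inner m).const_mul 2
  have hlin : Integrable (fun ω => ‖m‖ ^ 2 + 2 * inner ℝ m (u ω)) ν :=
    (integrable_const _).add hinner
  have hsq : Integrable (fun ω => ‖u ω‖ ^ 2) ν := (memLp_two_iff_integrable_sq_norm hu.1).1 hu
  simp_rw [norm_add_sq_real]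
  rw [integral_add hlin hsq, integral_add (integrable_const _) hinner, integral_const_mul,
    integral_inner (hu.integrable one_le_two), hu0]
  simp

theorem lintegral_nnnorm_sq_le_of_integral_eq {X : Ω → E} (hX : AEStronglyMeasurable X ν)
    {m : E} (hmean : ∫ ω, X ω ∂ν = m) {V : ℝ} (hV : 0 ≤ V)
    (hvar : ∫⁻ ω, (‖X ω - m‖₊ : ℝ≥0∞) ^ 2 ∂ν ≤ ENNReal.ofReal V) :
    ∫⁻ ω, (‖X ω‖₊ : ℝ≥0∞) ^ 2 ∂ν ≤ ENNReal.ofReal (‖m‖ ^ 2 + V) := by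
  have hu_meas : AEStronglyMeasurable (fun ω => X ω - m) ν := hX.sub aestronglyMeasurable_const
  have hu_sq : Integrable (fun ω => ‖X ω - m‖ ^ 2) ν := by
    refine ⟨hu_meas.norm.pow 2, ?_⟩
    rw [hasFiniteIntegral_iff_ofReal (ae_of_all _ fun _ => sq_nonneg _)]
    simp_rw [ENNReal.ofReal_norm_sq]
    exact hvar.trans_lt ENNReal.ofReal_lt_top
  have hu : MemLp (fun ω => X ω - m) 2 ν := (memLp_two_iff_integrable_sq_norm hu_meas).2 hu_sq
  have hX2 : MemLp X 2 ν := by simpa [Pi.add_def] using (memLp_const m).add hu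
  have hu0 : ∫ ω, X ω - m ∂ν = 0 := by
    rw [integral_sub (hX2.integrable one_le_two) (integrable_const m), hmean]
    simp
  have hpyth := integral_norm_add_sq_of_integral_eq_zero m hu hu0
  simp only [add_sub_cancel] at hpyth
  have hvar' : ∫ ω, ‖X ω - m‖ ^ 2 ∂ν ≤ V := by
    rwa [← ENNReal.ofReal_le_ofReal_iff hV, ofReal_integral_eq_lintegral_ofReal hu_sq
      (ae_of_all _ fun _ => sq_nonneg _), lintegral_congr fun ω => ENNReal.ofReal_norm_sq _]
  rw [← lintegral_congr fun ω => ENNReal.ofReal_norm_sq (X ω),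
    ← ofReal_integral_eq_lintegral_ofReal ((memLp_two_iff_integrable_sq_norm hX).1 hX2)
      (ae_of_all _ fun _ => sq_nonneg _), hpyth]
  exact ENNReal.ofReal_le_ofReal (by linarith)

end SecondMoment

/-- Covers both the stochastic gradient (`m = ∇f`, `V = σ²`) and the error compressor
(`m = id`, `V a = θ‖a‖²`). -/
structure IsUnbiasedOracle {α Ω E : Type*} [MeasurableSpace α] [MeasurableSpace Ω]
    [MeasurableSpace E] [NormedAddCommGroup E] [NormedSpace ℝ E]
    (X : α → Ω → E) (ν : Measure Ω) (m : α → E) (V : α → ℝ) : Prop where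
  measurable : Measurable (Function.uncurry X)
  integral_eq : ∀ a, ∫ ω, X a ω ∂ν = m a
  lintegral_sub_sq_le : ∀ a, ∫⁻ ω, (‖X a ω - m a‖₊ : ℝ≥0∞) ^ 2 ∂ν ≤ ENNReal.ofReal (V a)

theorem IsUnbiasedOracle.lintegral_nnnorm_sq_le {α Ω E : Type*} [MeasurableSpace α]
    [MeasurableSpace Ω] [NormedAddCommGroup E] [InnerProductSpace ℝ E] [CompleteSpace E]
    [MeasurableSpace E] [OpensMeasurableSpace E] [SecondCountableTopology E]
    {X : α → Ω → E} {ν : Measure Ω} [IsProbabilityMeasure ν] {m : α → E} {V : α → ℝ}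
    (hX : IsUnbiasedOracle X ν m V) (a : α) (hV : 0 ≤ V a) :
    ∫⁻ ω, (‖X a ω‖₊ : ℝ≥0∞) ^ 2 ∂ν ≤ ENNReal.ofReal (‖m a‖ ^ 2 + V a) :=
  lintegral_nnnorm_sq_le_of_integral_eq
    (hX.measurable.comp measurable_prodMk_left).aestronglyMeasurable (hX.integral_eq a) hV
    (hX.lintegral_sub_sq_le a)

theorem lintegral_nnnorm_inv_card_smul_sum_sq_le {ι Ω E : Type*} [Fintype ι] [MeasurableSpace Ω]
    {μ : Measure Ω} [NormedAddCommGroup E] [NormedSpace ℝ E] [MeasurableSpace E]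
    [OpensMeasurableSpace E] {v : ι → Ω → E} (hv : ∀ i, Measurable (v i)) {B : ℝ≥0∞}
    (hB : ∀ i, ∫⁻ ω, (‖v i ω‖₊ : ℝ≥0∞) ^ 2 ∂μ ≤ B) :
    ∫⁻ ω, (‖(Fintype.card ι : ℝ)⁻¹ • ∑ i, v i ω‖₊ : ℝ≥0∞) ^ 2 ∂μ ≤ B := by
  have hpt : ∀ ω, (‖(Fintype.card ι : ℝ)⁻¹ • ∑ i, v i ω‖₊ : ℝ≥0∞) ^ 2
      ≤ ENNReal.ofReal (Fintype.card ι : ℝ)⁻¹ * ∑ i, (‖v i ω‖₊ : ℝ≥0∞) ^ 2 := fun ω => by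
    rw [← ENNReal.ofReal_norm_sq]
    refine (ENNReal.ofReal_le_ofReal (norm_inv_card_smul_sum_sq_le _)).trans_eq ?_
    rw [ENNReal.ofReal_mul (by positivity), ENNReal.ofReal_sum_of_nonneg fun _ _ => sq_nonneg _]
    simp_rw [ENNReal.ofReal_norm_sq]
  set w := ENNReal.ofReal (Fintype.card ι : ℝ)⁻¹
  calc _ ≤ ∫⁻ ω, w * ∑ i, (‖v i ω‖₊ : ℝ≥0∞) ^ 2 ∂μ := lintegral_mono hpt
    _ = w * ∑ i, ∫⁻ ω, (‖v i ω‖₊ : ℝ≥0∞) ^ 2 ∂μ := by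
      rw [lintegral_const_mul' _ _ ENNReal.ofReal_ne_top,
        lintegral_finsetSum _ fun i _ => (hv i).nnnorm.coe_nnreal_ennreal.pow_const 2]
    _ ≤ w * (Fintype.card ι * B) := by
      grw [Finset.sum_le_sum fun i _ => hB i, Finset.sum_const, Finset.card_univ, nsmul_eq_mul]
    _ ≤ B := by
      rw [← mul_assoc, ← ENNReal.ofReal_natCast, ← ENNReal.ofReal_mul (by positivity)]
      exact mul_le_of_le_one_left' (ENNReal.ofReal_le_one.2 inv_mul_le_one)

theorem ProbabilityTheory.IndepFun.lintegral_comp_eq_lintegral_lintegral {Ω β γ : Type*}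
    [MeasurableSpace Ω] [MeasurableSpace β] [MeasurableSpace γ] {μ : Measure Ω}
    [IsProbabilityMeasure μ] {X : Ω → β} {s : Ω → γ} (hX : Measurable X) (hs : Measurable s)
    (hind : IndepFun X s μ) {ν : Measure γ} [IsProbabilityMeasure ν] (hlaw : μ.map s = ν)
    {F : β × γ → ℝ≥0∞} (hF : Measurable F) :
    ∫⁻ ω, F (X ω, s ω) ∂μ = ∫⁻ ω, ∫⁻ y, F (X ω, y) ∂ν ∂μ := by
  have hmap := (indepFun_iff_map_prod_eq_prod_map_map hX.aemeasurable hs.aemeasurable).1 hind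
  rw [hlaw] at hmap
  calc ∫⁻ ω, F (X ω, s ω) ∂μ
      = ∫⁻ z, F z ∂(μ.map fun ω => (X ω, s ω)) := (lintegral_map hF (hX.prodMk hs)).symm
    _ = ∫⁻ x, ∫⁻ y, F (x, y) ∂ν ∂(μ.map X) := by rw [hmap, lintegral_prod _ hF.aemeasurable]
    _ = ∫⁻ ω, ∫⁻ y, F (X ω, y) ∂ν ∂μ := lintegral_map hF.lintegral_prod_right' hX

section Seeds

variable {Ω S ι : Type*} [MeasurableSpace S]

abbrev seedsBefore (seed : ℕ → ι → Ω → S) (t : ℕ) : MeasurableSpace Ω :=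
  ⨆ q ∈ {q : ℕ × ι | q.1 < t}, MeasurableSpace.comap (seed q.1 q.2) ‹_›

theorem seedsBefore_mono (seed : ℕ → ι → Ω → S) : Monotone (seedsBefore seed) :=
  fun _ _ hst => biSup_mono fun _ hq => lt_of_lt_of_le hq hst

theorem measurable_seed_seedsBefore (seed : ℕ → ι → Ω → S) {a t : ℕ} (hat : a < t) (i : ι) :
    Measurable[seedsBefore seed t] (seed a i) :=
  Measurable.of_comap_le <| le_biSup (fun q : ℕ × ι => MeasurableSpace.comap (seed q.1 q.2) ‹_›)
    (show (a, i) ∈ {q : ℕ × ι | q.1 < t} from hat)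

variable [MeasurableSpace Ω] {seed : ℕ → ι → Ω → S}

theorem seedsBefore_le (hseed : ∀ t i, Measurable (seed t i)) (t : ℕ) :
    seedsBefore seed t ≤ ‹MeasurableSpace Ω› := by
  refine iSup_le fun q => iSup_le fun _ => ?_
  exact (hseed q.1 q.2).comap_le

theorem indepFun_seed_of_measurable_seedsBefore {μ : Measure Ω} {β : Type*} [MeasurableSpace β]
    (hseed : ∀ t i, Measurable (seed t i))
    (hindep : iIndepFun (fun q : ℕ × ι => seed q.1 q.2) μ) {t : ℕ} {X : Ω → β}
    (hX : Measurable[seedsBefore seed t] X) (i : ι) :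
    IndepFun X (seed t i) μ := by
  have hdisj : Disjoint {q : ℕ × ι | q.1 < t} {(t, i)} := by
    rw [Set.disjoint_singleton_right]
    exact lt_irrefl t
  rw [IndepFun_iff_Indep]
  have hpast := indep_iSup_of_disjoint (fun q => (hseed q.1 q.2).comap_le) hindep.iIndep hdisj
  refine indep_of_indep_of_le hpast hX.comap_le ?_
  rw [iSup_singleton]

end Seeds

section ConEF

variable {ι E Ωg ΩQ ΩC Ω : Type*}

def conefMomentum [AddCommGroup E] [Module ℝ E] (grad : E → Ωg → E) (η : ℝ) (a b : E)
    (s : Ωg) : E :=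
  η • grad a s + b

def conefError [AddCommGroup E] [Module ℝ E] (grad : E → Ωg → E) (Q : E → ΩQ → E)
    (C : E → ΩC → E) (η : ℝ) (a b : E) (s : Ωg × ΩQ × ΩC) : E :=
  let p := conefMomentum grad η a b s.1
  C (p - Q p s.2.1) s.2.2

structure IsConEFRun [Fintype ι] [AddCommGroup E] [Module ℝ E] (G' : ℕ → ι → E → Ωg → E)
    (Q : E → ΩQ → E) (C : E → ΩC → E) (η : ℝ) (seed : ℕ → ι → Ω → Ωg × ΩQ × ΩC)
    (x : ℕ → Ω → E) (e : ℕ → ι → Ω → E) : Prop where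
  x_zero : ∃ x₀, ∀ ω, x 0 ω = x₀
  e_zero : ∀ i ω, e 0 i ω = 0
  x_succ : ∀ t ω, x (t + 1) ω = x t ω - (Fintype.card ι : ℝ)⁻¹ •
    ∑ i, Q (conefMomentum (G' t i) η (x t ω) (e t i ω) (seed t i ω).1) (seed t i ω).2.1
  e_succ : ∀ t i ω, e (t + 1) i ω = conefError (G' t i) Q C η (x t ω) (e t i ω) (seed t i ω)

theorem nnnorm_conefMomentum_sq_le [SeminormedAddCommGroup E] [NormedSpace ℝ E]
    (grad : E → Ωg → E) (η : ℝ) (a b : E) (s : Ωg) {lam : ℝ} (hlam : 0 < lam) :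
    (‖conefMomentum grad η a b s‖₊ : ℝ≥0∞) ^ 2 ≤ ENNReal.ofReal ((1 + lam⁻¹) * η ^ 2)
      * (‖grad a s‖₊ : ℝ≥0∞) ^ 2 + ENNReal.ofReal (1 + lam) * (‖b‖₊ : ℝ≥0∞) ^ 2 := by
  simp only [← ENNReal.ofReal_norm_sq]
  rw [← ENNReal.ofReal_mul (by positivity), ← ENNReal.ofReal_mul (by positivity),
    ← ENNReal.ofReal_add (by positivity) (by positivity)]
  refine ENNReal.ofReal_le_ofReal ((norm_add_sq_le_one_add_inv_mul_add _ b hlam).trans_eq ?_)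
  rw [norm_smul, mul_pow, Real.norm_eq_abs, sq_abs]
  ring

variable [NormedAddCommGroup E] [NormedSpace ℝ E] [MeasurableSpace E] [BorelSpace E]
  [SecondCountableTopology E] [MeasurableSpace Ωg] [MeasurableSpace ΩQ] [MeasurableSpace ΩC]
  {grad : E → Ωg → E} {Q : E → ΩQ → E} {C : E → ΩC → E}

theorem measurable_conefMomentum (hG : Measurable (Function.uncurry grad)) (η : ℝ) :
    Measurable fun z : (E × E) × Ωg => conefMomentum grad η z.1.1 z.1.2 z.2 :=
  ((hG.comp (measurable_fst.fst.prodMk measurable_snd)).const_smul η).add measurable_fst.snd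

theorem measurable_conefError (hG : Measurable (Function.uncurry grad))
    (hQ : Measurable (Function.uncurry Q)) (hC : Measurable (Function.uncurry C)) (η : ℝ) :
    Measurable fun z : (E × E) × (Ωg × ΩQ × ΩC) => conefError grad Q C η z.1.1 z.1.2 z.2 := by
  have hp : Measurable fun z : (E × E) × (Ωg × ΩQ × ΩC) =>
      conefMomentum grad η z.1.1 z.1.2 z.2.1 :=
    (measurable_conefMomentum hG η).comp (measurable_fst.prodMk measurable_snd.fst)
  exact hC.comp ((hp.sub (hQ.comp (hp.prodMk measurable_snd.snd.fst))).prodMk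
    measurable_snd.snd.snd)

theorem IsConEFRun.measurable_seedsBefore [Fintype ι] {G' : ℕ → ι → E → Ωg → E} {η : ℝ}
    {seed : ℕ → ι → Ω → Ωg × ΩQ × ΩC} {x : ℕ → Ω → E} {e : ℕ → ι → Ω → E}
    (hrun : IsConEFRun G' Q C η seed x e) (hG : ∀ t i, Measurable (Function.uncurry (G' t i)))
    (hQ : Measurable (Function.uncurry Q)) (hC : Measurable (Function.uncurry C)) (t : ℕ) :
    Measurable[seedsBefore seed t] (x t) ∧ ∀ i, Measurable[seedsBefore seed t] (e t i) := by
  induction t with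
  | zero =>
    obtain ⟨x₀, hx₀⟩ := hrun.x_zero
    exact ⟨funext hx₀ ▸ measurable_const, fun i => funext (hrun.e_zero i) ▸ measurable_const⟩
  | succ t ih =>
    have hmono := seedsBefore_mono seed t.le_succ
    have hstate : ∀ i, Measurable[seedsBefore seed (t + 1)]
        fun ω => ((x t ω, e t i ω), seed t i ω) := fun i =>
      ((ih.1.mono hmono le_rfl).prodMk ((ih.2 i).mono hmono le_rfl)).prodMk
        (measurable_seed_seedsBefore seed t.lt_succ_self i)
    have hp : ∀ i, Measurable[seedsBefore seed (t + 1)]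
        fun ω => conefMomentum (G' t i) η (x t ω) (e t i ω) (seed t i ω).1 := fun i =>
      (measurable_conefMomentum (hG t i) η).comp
        ((measurable_fst.prodMk measurable_snd.fst).comp (hstate i))
    refine ⟨?_, fun i => ?_⟩
    · rw [funext (hrun.x_succ t)]
      exact (ih.1.mono hmono le_rfl).sub ((Finset.measurable_sum _ fun i _ =>
        hQ.comp ((hp i).prodMk (hstate i).snd.snd.fst)).const_smul _)
    · rw [funext (hrun.e_succ t i)]
      exact (measurable_conefError (hG t i) hQ hC η).comp (hstate i)

end ConEF

section ErrorBound

variable {E Ωg ΩQ ΩC : Type*} [NormedAddCommGroup E] [InnerProductSpace ℝ E] [CompleteSpace E]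
  [MeasurableSpace E] [BorelSpace E] [SecondCountableTopology E]
  [MeasurableSpace Ωg] [MeasurableSpace ΩQ] [MeasurableSpace ΩC]
  {νg : Measure Ωg} {νQ : Measure ΩQ} {νC : Measure ΩC} [IsProbabilityMeasure νC]
  {Q : E → ΩQ → E} {C : E → ΩC → E} {m : E → E} {σ θ δ c lam η : ℝ}

theorem lintegral_conefError_le_mul_lintegral_conefMomentum (grad : E → Ωg → E)
    (hQ : ∀ a, ∫⁻ ω, (‖Q a ω - a‖₊ : ℝ≥0∞) ^ 2 ∂νQ ≤ ENNReal.ofReal (δ * ‖a‖ ^ 2))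
    (hC : IsUnbiasedOracle C νC id fun a => θ * ‖a‖ ^ 2) (hθ : 0 ≤ θ) (hδ : 0 ≤ δ) (a b : E) :
    ∫⁻ s, (‖conefError grad Q C η a b s‖₊ : ℝ≥0∞) ^ 2 ∂νg.prod (νQ.prod νC)
      ≤ ENNReal.ofReal ((1 + θ) * δ) * ∫⁻ s, (‖conefMomentum grad η a b s‖₊ : ℝ≥0∞) ^ 2 ∂νg := by
  set p := conefMomentum grad η a b
  have hCsq : ∀ w, ∫⁻ s, (‖C w s‖₊ : ℝ≥0∞) ^ 2 ∂νC
      ≤ ENNReal.ofReal (1 + θ) * (‖w‖₊ : ℝ≥0∞) ^ 2 := fun w => by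
    rw [← ENNReal.ofReal_norm_sq, ← ENNReal.ofReal_mul (by positivity)]
    convert hC.lintegral_nnnorm_sq_le w (by positivity) using 2
    simp only [id]
    ring
  have hQsq : ∀ u, ∫⁻ s, ENNReal.ofReal (1 + θ) * (‖u - Q u s‖₊ : ℝ≥0∞) ^ 2 ∂νQ
      ≤ ENNReal.ofReal ((1 + θ) * δ) * (‖u‖₊ : ℝ≥0∞) ^ 2 := fun u => by
    rw [lintegral_const_mul' _ _ ENNReal.ofReal_ne_top, ← ENNReal.ofReal_norm_sq,
      ← ENNReal.ofReal_mul (by positivity), mul_assoc, ENNReal.ofReal_mul (by positivity)]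
    gcongr
    simpa only [← enorm_eq_nnnorm, enorm_sub_rev] using hQ u
  calc _ ≤ ∫⁻ s₁, ∫⁻ s₂, ∫⁻ s₃, (‖C (p s₁ - Q (p s₁) s₂) s₃‖₊ : ℝ≥0∞) ^ 2 ∂νC ∂νQ ∂νg :=
        (lintegral_prod_le _).trans (lintegral_mono fun _ => lintegral_prod_le _)
    _ ≤ ∫⁻ s₁, ∫⁻ s₂, ENNReal.ofReal (1 + θ) * (‖p s₁ - Q (p s₁) s₂‖₊ : ℝ≥0∞) ^ 2 ∂νQ ∂νg :=
        lintegral_mono fun _ => lintegral_mono fun _ => hCsq _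
    _ ≤ ∫⁻ s₁, ENNReal.ofReal ((1 + θ) * δ) * (‖p s₁‖₊ : ℝ≥0∞) ^ 2 ∂νg :=
        lintegral_mono fun _ => hQsq _
    _ = _ := lintegral_const_mul' _ _ ENNReal.ofReal_ne_top

variable [IsProbabilityMeasure νg]

theorem lintegral_conefError_le {grad : E → Ωg → E}
    (hG : IsUnbiasedOracle grad νg m fun _ => σ ^ 2)
    (hQ : ∀ a, ∫⁻ ω, (‖Q a ω - a‖₊ : ℝ≥0∞) ^ 2 ∂νQ ≤ ENNReal.ofReal (δ * ‖a‖ ^ 2))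
    (hC : IsUnbiasedOracle C νC id fun a => θ * ‖a‖ ^ 2) (hθ : 0 ≤ θ) (hδ : 0 ≤ δ)
    (hlam : 0 < lam) (hcoef : (1 + θ) * δ * (1 + lam) ≤ c) (a b : E) :
    ∫⁻ s, (‖conefError grad Q C η a b s‖₊ : ℝ≥0∞) ^ 2 ∂νg.prod (νQ.prod νC)
      ≤ ENNReal.ofReal c * (‖b‖₊ : ℝ≥0∞) ^ 2
        + ENNReal.ofReal (c / lam * η ^ 2) * ((‖m a‖₊ : ℝ≥0∞) ^ 2 + ENNReal.ofReal (σ ^ 2)) := by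
  set K := ENNReal.ofReal ((1 + θ) * δ)
  set A := ENNReal.ofReal ((1 + lam⁻¹) * η ^ 2)
  set B := ENNReal.ofReal (1 + lam)
  have hGsq : ∫⁻ s, (‖grad a s‖₊ : ℝ≥0∞) ^ 2 ∂νg
      ≤ (‖m a‖₊ : ℝ≥0∞) ^ 2 + ENNReal.ofReal (σ ^ 2) := by
    rw [← ENNReal.ofReal_norm_sq, ← ENNReal.ofReal_add (sq_nonneg _) (sq_nonneg _)]
    exact hG.lintegral_nnnorm_sq_le a (sq_nonneg σ)
  have hKB : K * B ≤ ENNReal.ofReal c := by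
    rw [← ENNReal.ofReal_mul (by positivity)]
    exact ENNReal.ofReal_le_ofReal hcoef
  have hKA : K * A ≤ ENNReal.ofReal (c / lam * η ^ 2) := by
    rw [← ENNReal.ofReal_mul (by positivity)]
    refine ENNReal.ofReal_le_ofReal ?_
    calc (1 + θ) * δ * ((1 + lam⁻¹) * η ^ 2) = (1 + θ) * δ * (1 + lam) / lam * η ^ 2 := by
          field_simp
          ring
      _ ≤ c / lam * η ^ 2 := by gcongr
  calc _ ≤ K * ∫⁻ s, (‖conefMomentum grad η a b s‖₊ : ℝ≥0∞) ^ 2 ∂νg :=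
        lintegral_conefError_le_mul_lintegral_conefMomentum grad hQ hC hθ hδ a b
    _ ≤ K * ∫⁻ s, (A * (‖grad a s‖₊ : ℝ≥0∞) ^ 2 + B * (‖b‖₊ : ℝ≥0∞) ^ 2) ∂νg := by
        gcongr with s
        exact nnnorm_conefMomentum_sq_le grad η a b s hlam
    _ = K * (A * ∫⁻ s, (‖grad a s‖₊ : ℝ≥0∞) ^ 2 ∂νg + B * (‖b‖₊ : ℝ≥0∞) ^ 2) := by
        rw [lintegral_add_right _ measurable_const, lintegral_const_mul' _ _ ENNReal.ofReal_ne_top,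
          lintegral_const, measure_univ, mul_one]
    _ ≤ K * (A * ((‖m a‖₊ : ℝ≥0∞) ^ 2 + ENNReal.ofReal (σ ^ 2)) + B * (‖b‖₊ : ℝ≥0∞) ^ 2) := by
        gcongr
    _ = K * B * (‖b‖₊ : ℝ≥0∞) ^ 2
          + K * A * ((‖m a‖₊ : ℝ≥0∞) ^ 2 + ENNReal.ofReal (σ ^ 2)) := by
        ring
    _ ≤ _ := by gcongr

theorem lintegral_conefError_comp_le [IsProbabilityMeasure νQ] {grad : E → Ωg → E}
    (hG : IsUnbiasedOracle grad νg m fun _ => σ ^ 2) (hQmeas : Measurable (Function.uncurry Q))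
    (hQ : ∀ a, ∫⁻ ω, (‖Q a ω - a‖₊ : ℝ≥0∞) ^ 2 ∂νQ ≤ ENNReal.ofReal (δ * ‖a‖ ^ 2))
    (hC : IsUnbiasedOracle C νC id fun a => θ * ‖a‖ ^ 2) (hθ : 0 ≤ θ) (hδ : 0 ≤ δ)
    (hlam : 0 < lam) (hcoef : (1 + θ) * δ * (1 + lam) ≤ c) {Ω : Type*} [MeasurableSpace Ω]
    {μ : Measure Ω} [IsProbabilityMeasure μ] {X Y : Ω → E} {s : Ω → Ωg × ΩQ × ΩC}
    (hXY : Measurable fun ω => (X ω, Y ω)) (hs : Measurable s)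
    (hind : IndepFun (fun ω => (X ω, Y ω)) s μ) (hlaw : μ.map s = νg.prod (νQ.prod νC)) {G : ℝ}
    (hgrad : ∫⁻ ω, (‖m (X ω)‖₊ : ℝ≥0∞) ^ 2 ∂μ ≤ ENNReal.ofReal (G ^ 2)) :
    ∫⁻ ω, (‖conefError grad Q C η (X ω) (Y ω) (s ω)‖₊ : ℝ≥0∞) ^ 2 ∂μ
      ≤ ENNReal.ofReal c * ∫⁻ ω, (‖Y ω‖₊ : ℝ≥0∞) ^ 2 ∂μ
        + ENNReal.ofReal (c / lam * η ^ 2 * (σ ^ 2 + G ^ 2)) := by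
  have hc : 0 ≤ c := (by positivity : 0 ≤ (1 + θ) * δ * (1 + lam)).trans hcoef
  have hF := (measurable_conefError hG.measurable hQmeas hC.measurable η).nnnorm
    |>.coe_nnreal_ennreal.pow_const 2
  have hY : Measurable fun ω => ENNReal.ofReal c * (‖Y ω‖₊ : ℝ≥0∞) ^ 2 :=
    (hXY.snd.nnnorm.coe_nnreal_ennreal.pow_const 2).const_mul _
  calc _ = ∫⁻ ω, ∫⁻ s, (‖conefError grad Q C η (X ω) (Y ω) s‖₊ : ℝ≥0∞) ^ 2
          ∂νg.prod (νQ.prod νC) ∂μ :=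
        hind.lintegral_comp_eq_lintegral_lintegral hXY hs hlaw hF
    _ ≤ ∫⁻ ω, (ENNReal.ofReal c * (‖Y ω‖₊ : ℝ≥0∞) ^ 2 + ENNReal.ofReal (c / lam * η ^ 2)
          * ((‖m (X ω)‖₊ : ℝ≥0∞) ^ 2 + ENNReal.ofReal (σ ^ 2))) ∂μ :=
        lintegral_mono fun ω => lintegral_conefError_le hG hQ hC hθ hδ hlam hcoef _ _
    _ = ENNReal.ofReal c * ∫⁻ ω, (‖Y ω‖₊ : ℝ≥0∞) ^ 2 ∂μ + ENNReal.ofReal (c / lam * η ^ 2)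
          * (∫⁻ ω, (‖m (X ω)‖₊ : ℝ≥0∞) ^ 2 ∂μ + ENNReal.ofReal (σ ^ 2)) := by
        rw [lintegral_add_left hY, lintegral_const_mul' _ _ ENNReal.ofReal_ne_top,
          lintegral_const_mul' _ _ ENNReal.ofReal_ne_top, lintegral_add_right _ measurable_const,
          lintegral_const, measure_univ, mul_one]
    _ ≤ ENNReal.ofReal c * ∫⁻ ω, (‖Y ω‖₊ : ℝ≥0∞) ^ 2 ∂μ + ENNReal.ofReal (c / lam * η ^ 2)
          * (ENNReal.ofReal (G ^ 2) + ENNReal.ofReal (σ ^ 2)) := by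
        gcongr
    _ = _ := by
        rw [← ENNReal.ofReal_add (sq_nonneg _) (sq_nonneg _), add_comm (G ^ 2),
          ← ENNReal.ofReal_mul (by positivity)]

theorem IsConEFRun.lintegral_error_le [IsProbabilityMeasure νQ] {ι Ω : Type*} [Fintype ι]
    [MeasurableSpace Ω] {μ : Measure Ω} [IsProbabilityMeasure μ] {G' : ℕ → ι → E → Ωg → E}
    {seed : ℕ → ι → Ω → Ωg × ΩQ × ΩC} {x : ℕ → Ω → E} {e : ℕ → ι → Ω → E}
    (hrun : IsConEFRun G' Q C η seed x e)
    (hG : ∀ t i, IsUnbiasedOracle (G' t i) νg m fun _ => σ ^ 2)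
    (hQmeas : Measurable (Function.uncurry Q))
    (hQ : ∀ a, ∫⁻ ω, (‖Q a ω - a‖₊ : ℝ≥0∞) ^ 2 ∂νQ ≤ ENNReal.ofReal (δ * ‖a‖ ^ 2))
    (hC : IsUnbiasedOracle C νC id fun a => θ * ‖a‖ ^ 2) (hθ : 0 ≤ θ) (hδ : 0 ≤ δ)
    (hlam : 0 < lam) (hcoef : (1 + θ) * δ * (1 + lam) ≤ c) (hc : c < 1)
    (hseed : ∀ t i, Measurable (seed t i))
    (hlaw : ∀ t i, μ.map (seed t i) = νg.prod (νQ.prod νC))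
    (hindep : iIndepFun (fun q : ℕ × ι => seed q.1 q.2) μ) {G : ℝ}
    (hgrad : ∀ t, ∫⁻ ω, (‖m (x t ω)‖₊ : ℝ≥0∞) ^ 2 ∂μ ≤ ENNReal.ofReal (G ^ 2)) (t : ℕ) (i : ι) :
    ∫⁻ ω, (‖e t i ω‖₊ : ℝ≥0∞) ^ 2 ∂μ
      ≤ ENNReal.ofReal (c / ((1 - c) * lam) * η ^ 2 * (σ ^ 2 + G ^ 2)) := by
  have hc0 : 0 ≤ c := (by positivity : 0 ≤ (1 + θ) * δ * (1 + lam)).trans hcoef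
  have hstep : ∀ t, ∫⁻ ω, (‖e (t + 1) i ω‖₊ : ℝ≥0∞) ^ 2 ∂μ
      ≤ ENNReal.ofReal c * ∫⁻ ω, (‖e t i ω‖₊ : ℝ≥0∞) ^ 2 ∂μ
        + ENNReal.ofReal (c / lam * η ^ 2 * (σ ^ 2 + G ^ 2)) := fun t => by
    obtain ⟨hx, he⟩ := hrun.measurable_seedsBefore (fun t i => (hG t i).measurable) hQmeas
      hC.measurable t
    have hXY := hx.prodMk (he i)
    simp_rw [hrun.e_succ t i]
    exact lintegral_conefError_comp_le (hG t i) hQmeas hQ hC hθ hδ hlam hcoef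
      (hXY.mono (seedsBefore_le hseed t) le_rfl) (hseed t i)
      (indepFun_seed_of_measurable_seedsBefore hseed hindep hXY i) (hlaw t i) (hgrad t)
  convert ENNReal.le_ofReal_div_one_sub_of_le_mul_add hc0 hc (by positivity)
    (by simp [hrun.e_zero]) hstep t using 2
  rw [mul_comm (1 - c), ← div_div]
  ring

end ErrorBound

theorem conef_error_energy_bound_general
    (d N : ℕ)
    (σ G δ θ c lam η : ℝ)
    (hθ : 0 ≤ θ)
    (hc : c ∈ Set.Ioo (0 : ℝ) 1) (hlam : 0 < lam)
    (hδeq : δ = c / ((1 + lam) * (1 + Real.sqrt θ) ^ 2))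
    (f : EuclideanSpace ℝ (Fin d) → ℝ)
    -- seed spaces for the stochastic gradients and the two compressors
    {Ωg ΩQ ΩC : Type} [MeasurableSpace Ωg] [MeasurableSpace ΩQ] [MeasurableSpace ΩC]
    (νg : Measure Ωg) (νQ : Measure ΩQ) (νC : Measure ΩC)
    [IsProbabilityMeasure νg] [IsProbabilityMeasure νQ] [IsProbabilityMeasure νC]
    (G' : ℕ → Fin N → EuclideanSpace ℝ (Fin d) → Ωg → EuclideanSpace ℝ (Fin d))
    (Q : EuclideanSpace ℝ (Fin d) → ΩQ → EuclideanSpace ℝ (Fin d))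
    (C : EuclideanSpace ℝ (Fin d) → ΩC → EuclideanSpace ℝ (Fin d))
    (hGmeas : ∀ t i, Measurable (Function.uncurry (G' t i)))
    (hQmeas : Measurable (Function.uncurry Q))
    (hCmeas : Measurable (Function.uncurry C))
    -- Assumption 2: unbiased stochastic gradients with bounded variance
    (hGmean : ∀ t i a, ∫ ω, G' t i a ω ∂νg = gradient f a)
    (hGvar : ∀ t i a,
      ∫⁻ ω, (‖G' t i a ω - gradient f a‖₊ : ℝ≥0∞) ^ 2 ∂νg ≤ ENNReal.ofReal (σ ^ 2))
    -- Assumption 4: contractive gradient compressor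
    (hQvar : ∀ a, ∫⁻ ω, (‖Q a ω - a‖₊ : ℝ≥0∞) ^ 2 ∂νQ ≤ ENNReal.ofReal (δ * ‖a‖ ^ 2))
    -- Assumption 3: unbiased error compressor
    (hCmean : ∀ a, ∫ ω, C a ω ∂νC = a)
    (hCvar : ∀ a, ∫⁻ ω, (‖C a ω - a‖₊ : ℝ≥0∞) ^ 2 ∂νC ≤ ENNReal.ofReal (θ * ‖a‖ ^ 2))
    -- the underlying sample space carrying i.i.d. fresh seeds for every (t, i)
    {Ω : Type} [MeasurableSpace Ω] (μ : Measure Ω) [IsProbabilityMeasure μ]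
    (seed : ℕ → Fin N → Ω → Ωg × ΩQ × ΩC)
    (hseedMeas : ∀ t i, Measurable (seed t i))
    (hseedLaw : ∀ t i, Measure.map (seed t i) μ = νg.prod (νQ.prod νC))
    (hseedIndep : iIndepFun
      (fun q : ℕ × Fin N => seed q.1 q.2) μ)
    -- the ConEF trajectories
    (x0 : EuclideanSpace ℝ (Fin d))
    (x : ℕ → Ω → EuclideanSpace ℝ (Fin d))
    (e g p Δ : ℕ → Fin N → Ω → EuclideanSpace ℝ (Fin d))
    (hx0 : ∀ ω, x 0 ω = x0)
    (he0 : ∀ i ω, e 0 i ω = 0)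
    (hg : ∀ t i ω, g t i ω = G' t i (x t ω) (seed t i ω).1)
    (hp : ∀ t i ω, p t i ω = η • g t i ω + e t i ω)
    (hΔ : ∀ t i ω, Δ t i ω = Q (p t i ω) (seed t i ω).2.1)
    (hx : ∀ t ω, x (t + 1) ω = x t ω - (N : ℝ)⁻¹ • ∑ i, Δ t i ω)
    (he : ∀ t i ω, e (t + 1) i ω = C (p t i ω - Δ t i ω) (seed t i ω).2.2)
    -- Assumption 2: bounded expected squared gradient norm
    (hgradbound : ∀ t,
      ∫⁻ ω, (‖gradient f (x t ω)‖₊ : ℝ≥0∞) ^ 2 ∂μ ≤ ENNReal.ofReal (G ^ 2)) :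
    ∀ t : ℕ,
      ∫⁻ ω, (‖(N : ℝ)⁻¹ • ∑ i, e (t + 1) i ω‖₊ : ℝ≥0∞) ^ 2 ∂μ
        ≤ ENNReal.ofReal ((c / ((1 - c) * lam)) * η ^ 2 * (σ ^ 2 + G ^ 2)) := by
  obtain ⟨hc0, hc1⟩ := hc
  have hrun : IsConEFRun G' Q C η seed x e :=
    ⟨⟨x0, hx0⟩, he0, fun t ω => by simp [hx, hΔ, hp, hg, conefMomentum],
      fun t i ω => by simp [he, hΔ, hp, hg, conefError, conefMomentum]⟩
  have hGo : ∀ t i, IsUnbiasedOracle (G' t i) νg (gradient f) fun _ => σ ^ 2 :=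
    fun t i => ⟨hGmeas t i, hGmean t i, hGvar t i⟩
  have hCo : IsUnbiasedOracle C νC id fun a => θ * ‖a‖ ^ 2 := ⟨hCmeas, hCmean, hCvar⟩
  have hworker := hrun.lintegral_error_le hGo hQmeas hQvar hCo hθ (hδeq ▸ by positivity) hlam
    (one_add_mul_mul_le_of_eq_div hlam hδeq hc0.le) hc1 hseedMeas hseedLaw hseedIndep hgradbound
  intro t
  have hmeas : ∀ i, Measurable (e (t + 1) i) := fun i =>
    ((hrun.measurable_seedsBefore hGmeas hQmeas hCmeas (t + 1)).2 i).mono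
      (seedsBefore_le hseedMeas _) le_rfl
  simpa only [Fintype.card_fin] using
    lintegral_nnnorm_inv_card_smul_sum_sq_le hmeas (hworker (t + 1))

/-- **ConEF error-energy bound (Lemma 1).**
Under the ConEF algorithm (`p t i = η • g t i + e t i`, `Δ t i = Q (p t i)`,
`x (t+1) = x t - (1/N) • ∑ i, Δ t i`, `e (t+1) i = C (p t i - Δ t i)`, `e 0 i = 0`),
with unbiased stochastic gradients of variance `≤ σ²` and `E[‖∇f(x t)‖²] ≤ G²`,
an unbiased error compressor `C` with `E[‖C a - a‖²|a] ≤ θ‖a‖²`, and a gradient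
compressor `Q` with `E[‖Q a - a‖²|a] ≤ δ‖a‖²` where `δ = c/((1+λ)(1+√θ)²)` for some
`c ∈ (0,1)`, `λ > 0`: for every `t ≥ 0`,
`E[‖(1/N) ∑ i, e (t+1) i‖²] ≤ (c/((1-c)λ)) η² (σ² + G²)`. -/
theorem conef_error_energy_bound
    (d N : ℕ) (hN : 0 < N)
    (σ G δ θ c lam η : ℝ)
    (hσ : 0 ≤ σ) (hG : 0 ≤ G) (hθ : 0 ≤ θ)
    (hδ0 : 0 < δ) (hδ1 : δ < 1) (hc : c ∈ Set.Ioo (0 : ℝ) 1) (hlam : 0 < lam)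
    (hδeq : δ = c / ((1 + lam) * (1 + Real.sqrt θ) ^ 2))
    (hη : 0 < η)
    (f : EuclideanSpace ℝ (Fin d) → ℝ) (hf : Differentiable ℝ f)
    -- seed spaces for the stochastic gradients and the two compressors
    {Ωg ΩQ ΩC : Type} [MeasurableSpace Ωg] [MeasurableSpace ΩQ] [MeasurableSpace ΩC]
    (νg : Measure Ωg) (νQ : Measure ΩQ) (νC : Measure ΩC)
    [IsProbabilityMeasure νg] [IsProbabilityMeasure νQ] [IsProbabilityMeasure νC]
    (G' : ℕ → Fin N → EuclideanSpace ℝ (Fin d) → Ωg → EuclideanSpace ℝ (Fin d))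
    (Q : EuclideanSpace ℝ (Fin d) → ΩQ → EuclideanSpace ℝ (Fin d))
    (C : EuclideanSpace ℝ (Fin d) → ΩC → EuclideanSpace ℝ (Fin d))
    (hGmeas : ∀ t i, Measurable (Function.uncurry (G' t i)))
    (hQmeas : Measurable (Function.uncurry Q))
    (hCmeas : Measurable (Function.uncurry C))
    -- Assumption 2: unbiased stochastic gradients with bounded variance
    (hGmean : ∀ t i a, ∫ ω, G' t i a ω ∂νg = gradient f a)
    (hGvar : ∀ t i a,
      ∫⁻ ω, (‖G' t i a ω - gradient f a‖₊ : ℝ≥0∞) ^ 2 ∂νg ≤ ENNReal.ofReal (σ ^ 2))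
    -- Assumption 4: contractive gradient compressor
    (hQvar : ∀ a, ∫⁻ ω, (‖Q a ω - a‖₊ : ℝ≥0∞) ^ 2 ∂νQ ≤ ENNReal.ofReal (δ * ‖a‖ ^ 2))
    -- Assumption 3: unbiased error compressor
    (hCmean : ∀ a, ∫ ω, C a ω ∂νC = a)
    (hCvar : ∀ a, ∫⁻ ω, (‖C a ω - a‖₊ : ℝ≥0∞) ^ 2 ∂νC ≤ ENNReal.ofReal (θ * ‖a‖ ^ 2))
    -- the underlying sample space carrying i.i.d. fresh seeds for every (t, i)
    {Ω : Type} [MeasurableSpace Ω] (μ : Measure Ω) [IsProbabilityMeasure μ]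
    (seed : ℕ → Fin N → Ω → Ωg × ΩQ × ΩC)
    (hseedMeas : ∀ t i, Measurable (seed t i))
    (hseedLaw : ∀ t i, Measure.map (seed t i) μ = νg.prod (νQ.prod νC))
    (hseedIndep : iIndepFun
      (fun q : ℕ × Fin N => seed q.1 q.2) μ)
    -- the ConEF trajectories
    (x0 : EuclideanSpace ℝ (Fin d))
    (x : ℕ → Ω → EuclideanSpace ℝ (Fin d))
    (e g p Δ : ℕ → Fin N → Ω → EuclideanSpace ℝ (Fin d))
    (hx0 : ∀ ω, x 0 ω = x0)
    (he0 : ∀ i ω, e 0 i ω = 0)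
    (hg : ∀ t i ω, g t i ω = G' t i (x t ω) (seed t i ω).1)
    (hp : ∀ t i ω, p t i ω = η • g t i ω + e t i ω)
    (hΔ : ∀ t i ω, Δ t i ω = Q (p t i ω) (seed t i ω).2.1)
    (hx : ∀ t ω, x (t + 1) ω = x t ω - (N : ℝ)⁻¹ • ∑ i, Δ t i ω)
    (he : ∀ t i ω, e (t + 1) i ω = C (p t i ω - Δ t i ω) (seed t i ω).2.2)
    -- Assumption 2: bounded expected squared gradient norm
    (hgradbound : ∀ t,
      ∫⁻ ω, (‖gradient f (x t ω)‖₊ : ℝ≥0∞) ^ 2 ∂μ ≤ ENNReal.ofReal (G ^ 2)) :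
    ∀ t : ℕ,
      ∫⁻ ω, (‖(N : ℝ)⁻¹ • ∑ i, e (t + 1) i ω‖₊ : ℝ≥0∞) ^ 2 ∂μ
        ≤ ENNReal.ofReal ((c / ((1 - c) * lam)) * η ^ 2 * (σ ^ 2 + G ^ 2)) :=
  conef_error_energy_bound_general d N σ G δ θ c lam η hθ hc hlam hδeq f νg νQ νC G' Q C hGmeas
    hQmeas hCmeas hGmean hGvar hQvar hCmean hCvar μ seed hseedMeas hseedLaw hseedIndep x0 x e g p Δ
    hx0 he0 hg hp hΔ hx he hgradbound
end
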